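/- arXiv:1010.3673 — 4 statements merged into one kernel-verified Lean document; each statement's English description precedes it below -/
import Mathlib

section
/- Let X be a geodesic metric space and x a point of X. If X \ {x} is disconnected, then the connected components of X \ {x} coincide with its path components. -/
/-- A map `γ` is a geodesic (unit-speed) on the interval `[a,b]`. -/
def IsGeodesicOn {F : Type*} [MetricSpace F] (γ : ℝ → F) (a b : ℝ) : Prop :=
  ∀ s ∈ Set.Icc a b, ∀ t ∈ Set.Icc a b, dist (γ s) (γ t) = |s - t|

/-- A metric space is geodesic if every two points are joined by a geodesic. -/
def GeodesicSpace (F : Type*) [MetricSpace F] : Prop :=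
  ∀ x y : F, ∃ γ : ℝ → F, γ 0 = x ∧ γ (dist x y) = y ∧ IsGeodesicOn γ 0 (dist x y)

/-!
Balls in a geodesic space are path-connected, since the geodesic from the center to any point
of the ball stays in the ball; so a geodesic space is locally path-connected. In a locally
path-connected space the connected components of an open set are open, hence path-connected,
so they are exactly its path components. The open set here is `X \ {x}`.
-/

open Set Metric

section Geodesic

variable {X : Type*} [MetricSpace X]

theorem IsGeodesicOn.lipschitzOnWith {γ : ℝ → X} {a b : ℝ} (hγ : IsGeodesicOn γ a b) :
    LipschitzOnWith 1 γ (Icc a b) :=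
  LipschitzOnWith.of_dist_le_mul fun s hs t ht => by
    rw [hγ s hs t ht, NNReal.coe_one, one_mul, Real.dist_eq]

theorem IsGeodesicOn.isPathConnected_image {γ : ℝ → X} {a b : ℝ} (hγ : IsGeodesicOn γ a b)
    (hab : a ≤ b) : IsPathConnected (γ '' Icc a b) :=
  ((convex_Icc a b).isPathConnected (nonempty_Icc.2 hab)).image'
    hγ.lipschitzOnWith.continuousOn

theorem GeodesicSpace.isPathConnected_ball (hgeo : GeodesicSpace X) (p : X) {r : ℝ}
    (hr : 0 < r) : IsPathConnected (ball p r) := by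
  refine ⟨p, mem_ball_self hr, fun q hq => ?_⟩
  obtain ⟨γ, hγp, hγq, hγ⟩ := hgeo p q
  have hpq : 0 ≤ dist p q := dist_nonneg
  have hsub : γ '' Icc 0 (dist p q) ⊆ ball p r := by
    rintro _ ⟨t, ht, rfl⟩
    have hdist : dist (γ t) p = t := by
      rw [← hγp, hγ t ht 0 (left_mem_Icc.2 hpq), sub_zero, abs_of_nonneg ht.1]
    rw [mem_ball, hdist]
    exact ht.2.trans_lt (dist_comm p q ▸ hq)
  exact ((hγ.isPathConnected_image hpq).joinedIn _ ⟨0, left_mem_Icc.2 hpq, hγp⟩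
    _ ⟨_, right_mem_Icc.2 hpq, hγq⟩).mono hsub

theorem GeodesicSpace.locallyPathConnectedSpace (hgeo : GeodesicSpace X) :
    LocallyPathConnectedSpace X :=
  .of_bases (fun _ => nhds_basis_ball) fun p _ hr => hgeo.isPathConnected_ball p hr

end Geodesic

theorem IsOpen.connectedComponentIn_eq_pathComponentIn {X : Type*} [TopologicalSpace X]
    [LocallyPathConnectedSpace X] {U : Set X} (hU : IsOpen U) {y : X} (hy : y ∈ U) :
    connectedComponentIn U y = pathComponentIn U y := by
  have hpath : IsPathConnected (connectedComponentIn U y) :=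
    hU.connectedComponentIn.isConnected_iff_isPathConnected.1
      (isConnected_connectedComponentIn_iff.2 hy)
  exact (hpath.subset_pathComponentIn (mem_connectedComponentIn hy)
      (connectedComponentIn_subset U y)).antisymm
    ((isPathConnected_pathComponentIn hy).isConnected.isPreconnected.subset_connectedComponentIn
      (mem_pathComponentIn_self hy) pathComponentIn_subset)

theorem stmt_0_general {X : Type*} [MetricSpace X] (hgeo : GeodesicSpace X) (x : X) :
    ∀ y ∈ ({x}ᶜ : Set X),
      connectedComponentIn ({x}ᶜ : Set X) y = pathComponentIn ({x}ᶜ : Set X) y := by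
  have := hgeo.locallyPathConnectedSpace
  exact fun y hy => isOpen_compl_singleton.connectedComponentIn_eq_pathComponentIn hy

/-- in a geodesic metric space `X`, if `X \ {x}` is disconnected, then the
connected components of `X \ {x}` coincide with its path components. -/
theorem stmt_0 {X : Type*} [MetricSpace X] (hgeo : GeodesicSpace X) (x : X)
    (hdisc : ¬ IsPreconnected ({x}ᶜ : Set X)) :
    ∀ y ∈ ({x}ᶜ : Set X),
      connectedComponentIn ({x}ᶜ : Set X) y = pathComponentIn ({x}ᶜ : Set X) y :=
  stmt_0_general hgeo x
end

section
/- Let F be a geodesic metric space tree-graded with respect to a collection P of pieces. Then every two distinct pieces intersect in at most one point, and consequently the intersection of any topological arc in F with a piece, if nonempty and containing more than one point, is a sub-arc. -/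
/-- A subset is geodesic: any two of its points are joined by a geodesic inside it. -/
def GeodesicSubset {F : Type*} [MetricSpace F] (p : Set F) : Prop :=
  ∀ x ∈ p, ∀ y ∈ p, ∃ γ : ℝ → F, γ 0 = x ∧ γ (dist x y) = y ∧
    IsGeodesicOn γ 0 (dist x y) ∧ γ '' Set.Icc 0 (dist x y) ⊆ p

/-- A nontrivial simple geodesic triangle: a simple loop `γ` on `[0,L]` composed of three
geodesics `[0,a]`, `[a,b]`, `[b,L]`. -/
structure SimpleGeodesicTriangle {F : Type*} [MetricSpace F]
    (γ : ℝ → F) (a b L : ℝ) : Prop where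
  L_pos : 0 < L
  ha : 0 ≤ a
  hab : a ≤ b
  hbL : b ≤ L
  side1 : IsGeodesicOn γ 0 a
  side2 : IsGeodesicOn γ a b
  side3 : IsGeodesicOn γ b L
  closed : γ 0 = γ L
  simple : Set.InjOn γ (Set.Ico 0 L)

/-- `F` is tree-graded with respect to the collection `P` of pieces. -/
structure IsTreeGraded {F : Type*} [MetricSpace F] (P : Set (Set F)) : Prop where
  pieces_nonempty : ∀ p ∈ P, p.Nonempty
  pieces_closed : ∀ p ∈ P, IsClosed p
  pieces_geodesic : ∀ p ∈ P, GeodesicSubset p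
  T1 : ∀ p ∈ P, ∀ q ∈ P, p ≠ q → (p ∩ q).Subsingleton
  T2 : ∀ (γ : ℝ → F) (a b L : ℝ), SimpleGeodesicTriangle γ a b L →
    ∃ p ∈ P, γ '' Set.Icc 0 L ⊆ p

/-!
(T1) is part of the definition; the content is that `{u ∈ [a, b] | c u ∈ p}` is convex.
Every point `x` has a gate in `p`: a point `e ∈ p` with `d(x, z) = d(x, e) + d(e, z)` for all
`z ∈ p`, namely the point where any geodesic from `x` first enters `p`; two different first-entry
points would close up, together with a geodesic inside `p`, a simple geodesic triangle that lies in
a piece meeting `p` in two points. The same triangle argument, run on `x`, `y` and the geodesic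
`x → e_x → e_y`, shows that two points joined by a geodesic missing `p` have the same gate. So if
the arc left `p` at `c u` and came back at `c v`, the gate of `c s` would be locally constant,
hence constant, for `s ∈ (u, v)`; as `s → u` and `s → v` it tends to `c u` and to `c v`, so
`c u = c v`, which injectivity forbids.
-/

open Set Filter Topology Metric

section Intervals

variable {X : Type*} [TopologicalSpace X] {f : ℝ → X} {a b : ℝ} {K : Set X}

theorem exists_last_mem_of_continuousOn (hab : a ≤ b) (hf : ContinuousOn f (Icc a b))
    (hK : IsClosed K) (ha : f a ∈ K) : ∃ t ∈ Icc a b, f t ∈ K ∧ ∀ s ∈ Ioc t b, f s ∉ K := by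
  have hT : IsCompact (Icc a b ∩ f ⁻¹' K) := isCompact_Icc.of_isClosed_subset
    (hf.preimage_isClosed_of_isClosed isClosed_Icc hK) inter_subset_left
  obtain ⟨t, ⟨ht, htK⟩, hmax⟩ := hT.exists_isGreatest ⟨a, left_mem_Icc.2 hab, ha⟩
  exact ⟨t, ht, htK, fun s hs hsK => hs.1.not_ge (hmax ⟨⟨ht.1.trans hs.1.le, hs.2⟩, hsK⟩)⟩

theorem exists_first_mem_of_continuousOn (hab : a ≤ b) (hf : ContinuousOn f (Icc a b))
    (hK : IsClosed K) (hb : f b ∈ K) : ∃ t ∈ Icc a b, f t ∈ K ∧ ∀ s ∈ Ico a t, f s ∉ K := by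
  have hT : IsCompact (Icc a b ∩ f ⁻¹' K) := isCompact_Icc.of_isClosed_subset
    (hf.preimage_isClosed_of_isClosed isClosed_Icc hK) inter_subset_left
  obtain ⟨t, ⟨ht, htK⟩, hmin⟩ := hT.exists_isLeast ⟨b, right_mem_Icc.2 hab, hb⟩
  exact ⟨t, ht, htK, fun s hs hsK => hs.2.not_ge (hmin ⟨⟨hs.1, hs.2.le.trans ht.2⟩, hsK⟩)⟩

theorem Icc_add_eq_image (a b : ℝ) : Icc a (a + b) = (a + ·) '' Icc 0 b := by
  rw [image_const_add_Icc, add_zero]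

theorem Ico_add_eq_image (a b : ℝ) : Ico a (a + b) = (a + ·) '' Ico 0 b := by
  rw [image_const_add_Ico, add_zero]

theorem image_comp_const_add_Icc {Y : Type*} (g : ℝ → Y) (s t : ℝ) :
    (fun r => g (s + r)) '' Icc 0 (t - s) = g '' Icc s t := by
  rw [← image_image g (s + ·), image_const_add_Icc, add_zero, add_sub_cancel]

theorem image_comp_const_sub_Icc {Y : Type*} (g : ℝ → Y) (s t : ℝ) :
    (fun r => g (t - r)) '' Icc 0 (t - s) = g '' Icc s t := by
  rw [← image_image g (t - ·), image_const_sub_Icc, sub_zero, sub_sub_cancel]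

end Intervals

theorem eq_of_tendsto_of_dist_le {F X : Type*} [MetricSpace F] {l : Filter X} [l.NeBot]
    {f : X → F} {y e : F} (hf : Tendsto f l (𝓝 y)) (he : ∀ᶠ s in l, dist e y ≤ dist (f s) y) :
    e = y :=
  dist_le_zero.1 <| ge_of_tendsto (tendsto_iff_dist_tendsto_zero.1 hf) he

namespace IsGeodesicOn

variable {F : Type*} [MetricSpace F] {γ : ℝ → F} {a b : ℝ}

theorem dist_eq_sub (h : IsGeodesicOn γ a b) {s t : ℝ} (hs : s ∈ Icc a b) (ht : t ∈ Icc a b)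
    (hst : s ≤ t) : dist (γ s) (γ t) = t - s := by
  rw [h s hs t ht, abs_of_nonpos (sub_nonpos.2 hst), neg_sub]

theorem dist_add_dist (h : IsGeodesicOn γ a b) {s : ℝ} (hs : s ∈ Icc a b) :
    dist (γ a) (γ s) + dist (γ s) (γ b) = dist (γ a) (γ b) := by
  have hab : a ≤ b := hs.1.trans hs.2
  rw [h.dist_eq_sub (left_mem_Icc.2 hab) hs hs.1, h.dist_eq_sub hs (right_mem_Icc.2 hab) hs.2,
    h.dist_eq_sub (left_mem_Icc.2 hab) (right_mem_Icc.2 hab) hab]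
  ring

theorem continuousOn (h : IsGeodesicOn γ a b) : ContinuousOn γ (Icc a b) :=
  (LipschitzOnWith.of_dist_le_mul fun s hs t ht => by
    simp [h s hs t ht, Real.dist_eq] : LipschitzOnWith 1 γ (Icc a b)).continuousOn

theorem injOn (h : IsGeodesicOn γ a b) : InjOn γ (Icc a b) := fun s hs t ht hst => by
  simpa [hst, eq_comm, sub_eq_zero] using h s hs t ht

theorem isCompact_image (h : IsGeodesicOn γ a b) : IsCompact (γ '' Icc a b) :=
  isCompact_Icc.image_of_continuousOn h.continuousOn

theorem comp {a' b' : ℝ} (h : IsGeodesicOn γ a b) {φ : ℝ → ℝ}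
    (hφ : ∀ s t, |φ s - φ t| = |s - t|) (hmaps : MapsTo φ (Icc a' b') (Icc a b)) :
    IsGeodesicOn (γ ∘ φ) a' b' :=
  fun s hs t ht => (h _ (hmaps hs) _ (hmaps ht)).trans (hφ s t)

theorem congr {γ' : ℝ → F} (h : IsGeodesicOn γ a b) (heq : EqOn γ γ' (Icc a b)) :
    IsGeodesicOn γ' a b := fun s hs t ht => by
  rw [← heq hs, ← heq ht]
  exact h s hs t ht

theorem mono {a' b' : ℝ} (h : IsGeodesicOn γ a b) (ha : a ≤ a') (hb : b' ≤ b) :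
    IsGeodesicOn γ a' b' :=
  h.comp (φ := id) (fun _ _ => rfl) fun _ hs => ⟨ha.trans hs.1, hs.2.trans hb⟩

theorem shift {s t : ℝ} (h : IsGeodesicOn γ a b) (hs : a ≤ s) (ht : t ≤ b) :
    IsGeodesicOn (fun r => γ (s + r)) 0 (t - s) :=
  h.comp (φ := (s + ·)) (fun _ _ => by ring_nf) fun r hr =>
    ⟨by linarith [hr.1], by linarith [hr.2]⟩

theorem reverse {s t : ℝ} (h : IsGeodesicOn γ a b) (hs : a ≤ s) (ht : t ≤ b) :
    IsGeodesicOn (fun r => γ (t - r)) 0 (t - s) :=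
  h.comp (φ := (t - ·)) (fun _ _ => by rw [abs_sub_comm]; ring_nf) fun r hr =>
    ⟨by linarith [hr.2], by linarith [hr.1]⟩

theorem of_Icc_self (γ : ℝ → F) (a : ℝ) : IsGeodesicOn γ a a := fun s hs t ht => by
  rw [le_antisymm hs.2 hs.1, le_antisymm ht.2 ht.1, dist_self, sub_self, abs_zero]

theorem glue {c : ℝ} (h₁ : IsGeodesicOn γ a b) (h₂ : IsGeodesicOn γ b c) (hab : a ≤ b)
    (hbc : b ≤ c) (hac : dist (γ a) (γ c) = c - a) : IsGeodesicOn γ a c := by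
  suffices key : ∀ s ∈ Icc a c, ∀ t ∈ Icc a c, s ≤ t → dist (γ s) (γ t) = t - s by
    intro s hs t ht
    rcases le_total s t with hst | hts
    · rw [key s hs t ht hst, abs_of_nonpos (sub_nonpos.2 hst), neg_sub]
    · rw [dist_comm, key t ht s hs hts, abs_of_nonneg (sub_nonneg.2 hts)]
  intro s hs t ht hst
  by_cases htb : t ≤ b
  · exact h₁.dist_eq_sub ⟨hs.1, hst.trans htb⟩ ⟨ht.1, htb⟩ hst
  by_cases hbs : b ≤ s
  · exact h₂.dist_eq_sub ⟨hbs, hs.2⟩ ⟨hbs.trans hst, ht.2⟩ hst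
  rw [not_le] at htb hbs
  have has := h₁.dist_eq_sub (left_mem_Icc.2 hab) ⟨hs.1, hbs.le⟩ hs.1
  have hsb := h₁.dist_eq_sub ⟨hs.1, hbs.le⟩ (right_mem_Icc.2 hab) hbs.le
  have hbt := h₂.dist_eq_sub (left_mem_Icc.2 hbc) ⟨htb.le, ht.2⟩ htb.le
  have htc := h₂.dist_eq_sub ⟨htb.le, ht.2⟩ (right_mem_Icc.2 hbc) ht.2
  have hup := dist_triangle (γ s) (γ b) (γ t)
  have hlow := dist_triangle4 (γ a) (γ s) (γ t) (γ c)
  linarith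

end IsGeodesicOn

section ConcatPath

variable {X : Type*} {γ₁ γ₂ : ℝ → X} {a b r : ℝ}

noncomputable def concatPath (γ₁ γ₂ : ℝ → X) (a : ℝ) : ℝ → X :=
  fun r => if r ≤ a then γ₁ r else γ₂ (r - a)

theorem concatPath_of_le (hr : r ≤ a) : concatPath γ₁ γ₂ a r = γ₁ r := if_pos hr

theorem concatPath_of_ge (hj : γ₁ a = γ₂ 0) (hr : a ≤ r) :
    concatPath γ₁ γ₂ a r = γ₂ (r - a) := by
  rcases hr.eq_or_lt with rfl | hr
  · simp [concatPath, hj]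
  · exact if_neg hr.not_ge

theorem concatPath_add (hj : γ₁ a = γ₂ 0) (hr : 0 ≤ r) : concatPath γ₁ γ₂ a (a + r) = γ₂ r := by
  rw [concatPath_of_ge hj (by linarith), add_sub_cancel_left]

theorem concatPath_image_of_subset_Iic {s : Set ℝ} (hs : s ⊆ Iic a) :
    concatPath γ₁ γ₂ a '' s = γ₁ '' s :=
  image_congr fun _ hr => concatPath_of_le (hs hr)

theorem concatPath_image_add (hj : γ₁ a = γ₂ 0) {s : Set ℝ} (hs : s ⊆ Ici 0) :
    concatPath γ₁ γ₂ a '' ((a + ·) '' s) = γ₂ '' s := by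
  rw [image_image]
  exact image_congr fun _ hr => concatPath_add hj (hs hr)

theorem concatPath_image_Icc (hj : γ₁ a = γ₂ 0) (ha : 0 ≤ a) (hb : 0 ≤ b) :
    concatPath γ₁ γ₂ a '' Icc 0 (a + b) = γ₁ '' Icc 0 a ∪ γ₂ '' Icc 0 b := by
  rw [← Icc_union_Icc_eq_Icc ha (le_add_of_nonneg_right hb), image_union, Icc_add_eq_image,
    concatPath_image_of_subset_Iic fun _ hr => hr.2, concatPath_image_add hj fun _ hr => hr.1]

theorem concatPath_image_Ico (hj : γ₁ a = γ₂ 0) (ha : 0 ≤ a) (hb : 0 ≤ b) :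
    concatPath γ₁ γ₂ a '' Ico 0 (a + b) = γ₁ '' Ico 0 a ∪ γ₂ '' Ico 0 b := by
  rw [← Ico_union_Ico_eq_Ico ha (le_add_of_nonneg_right hb), image_union, Ico_add_eq_image,
    concatPath_image_of_subset_Iic fun _ hr => hr.2.le, concatPath_image_add hj fun _ hr => hr.1]

theorem injOn_concatPath (hj : γ₁ a = γ₂ 0) (ha : 0 ≤ a) (hb : 0 ≤ b)
    (h₁ : InjOn γ₁ (Ico 0 a)) (h₂ : InjOn γ₂ (Ico 0 b))
    (hd : Disjoint (γ₁ '' Ico 0 a) (γ₂ '' Ico 0 b)) :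
    InjOn (concatPath γ₁ γ₂ a) (Ico 0 (a + b)) := by
  rw [← Ico_union_Ico_eq_Ico ha (le_add_of_nonneg_right hb), injOn_union Ico_disjoint_Ico_same,
    Ico_add_eq_image]
  refine ⟨h₁.congr fun _ hr => (concatPath_of_le hr.2.le).symm,
    InjOn.image_of_comp <| h₂.congr fun _ hr => (concatPath_add hj hr.1).symm, ?_⟩
  rintro x hx _ ⟨y, hy, rfl⟩ hxy
  rw [concatPath_of_le hx.2.le, concatPath_add hj hy.1] at hxy
  exact hd.ne_of_mem (mem_image_of_mem γ₁ hx) (mem_image_of_mem γ₂ hy) hxy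

end ConcatPath

namespace IsGeodesicOn

variable {F : Type*} [MetricSpace F] {γ₁ γ₂ : ℝ → F} {a b : ℝ}

theorem concatPath_left (h : IsGeodesicOn γ₁ 0 a) : IsGeodesicOn (concatPath γ₁ γ₂ a) 0 a :=
  h.congr fun _ hr => (concatPath_of_le hr.2).symm

theorem concatPath_right {s t : ℝ} (hj : γ₁ a = γ₂ 0) (h : IsGeodesicOn γ₂ s t) (hs : 0 ≤ s) :
    IsGeodesicOn (concatPath γ₁ γ₂ a) (a + s) (a + t) :=
  (h.comp (φ := (· - a)) (fun _ _ => by ring_nf) fun _ hr =>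
    ⟨by linarith [hr.1], by linarith [hr.2]⟩).congr fun _ hr =>
      (concatPath_of_ge hj (by linarith [hr.1])).symm

theorem concatPath_of_dist_eq (hj : γ₁ a = γ₂ 0) (ha : 0 ≤ a) (hb : 0 ≤ b)
    (h₁ : IsGeodesicOn γ₁ 0 a) (h₂ : IsGeodesicOn γ₂ 0 b) (hd : dist (γ₁ 0) (γ₂ b) = a + b) :
    IsGeodesicOn (concatPath γ₁ γ₂ a) 0 (a + b) := by
  refine h₁.concatPath_left.glue ?_ ha (by linarith) ?_
  · simpa using h₂.concatPath_right hj le_rfl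
  · rwa [concatPath_of_le ha, concatPath_add hj hb, sub_zero]

end IsGeodesicOn

section Gate

variable {F : Type*} [MetricSpace F]

def IsGate (p : Set F) (x e : F) : Prop :=
  e ∈ p ∧ ∀ z ∈ p, dist x z = dist x e + dist e z

namespace IsGate

variable {p : Set F} {x e : F}

theorem dist_le (h : IsGate p x e) {z : F} (hz : z ∈ p) : dist e z ≤ dist x z := by
  rw [h.2 z hz]
  exact le_add_of_nonneg_left dist_nonneg

theorem geodesic_notMem (h : IsGate p x e) {γ : ℝ → F} (hγ : IsGeodesicOn γ 0 (dist x e))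
    (h0 : γ 0 = x) (h1 : γ (dist x e) = e) : ∀ t ∈ Ico 0 (dist x e), γ t ∉ p := by
  intro t ht htp
  have hxt := hγ.dist_eq_sub (left_mem_Icc.2 dist_nonneg) ⟨ht.1, ht.2.le⟩ ht.1
  have hte := hγ.dist_eq_sub ⟨ht.1, ht.2.le⟩ (right_mem_Icc.2 dist_nonneg) ht.2.le
  have hxe := h.2 _ htp
  rw [h0] at hxt
  rw [h1, dist_comm] at hte
  linarith [ht.2]

end IsGate

end Gate

namespace IsTreeGraded

variable {F : Type*} [MetricSpace F] {P : Set (Set F)} {p : Set F}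

theorem eq_of_mem_of_mem (hTG : IsTreeGraded P) {p q : Set F} (hp : p ∈ P) (hq : q ∈ P)
    {x y : F} (hne : x ≠ y) (hxp : x ∈ p) (hxq : x ∈ q) (hyp : y ∈ p) (hyq : y ∈ q) : p = q := by
  by_contra hpq
  exact hne (hTG.T1 p hp q hq hpq ⟨hxp, hxq⟩ ⟨hyp, hyq⟩)

theorem exists_piece_of_simple_triangle (hTG : IsTreeGraded P) {γ₁ γ₂ γ₃ : ℝ → F}
    {a₁ a₂ a₃ : ℝ} (h₁ : 0 ≤ a₁) (h₂ : 0 ≤ a₂) (h₃ : 0 ≤ a₃) (hpos : 0 < a₁ + a₂ + a₃)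
    (g₁ : IsGeodesicOn γ₁ 0 a₁) (g₂ : IsGeodesicOn γ₂ 0 a₂) (g₃ : IsGeodesicOn γ₃ 0 a₃)
    (e₁₂ : γ₁ a₁ = γ₂ 0) (e₂₃ : γ₂ a₂ = γ₃ 0) (e₃₁ : γ₃ a₃ = γ₁ 0)
    (d₁₂ : Disjoint (γ₁ '' Ico 0 a₁) (γ₂ '' Ico 0 a₂))
    (d₁₃ : Disjoint (γ₁ '' Ico 0 a₁) (γ₃ '' Ico 0 a₃))
    (d₂₃ : Disjoint (γ₂ '' Ico 0 a₂) (γ₃ '' Ico 0 a₃)) :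
    ∃ q ∈ P, γ₁ '' Icc 0 a₁ ∪ (γ₂ '' Icc 0 a₂ ∪ γ₃ '' Icc 0 a₃) ⊆ q := by
  have e₁ : γ₁ a₁ = concatPath γ₂ γ₃ a₂ 0 := by rw [e₁₂, concatPath_of_le h₂]
  have htri : SimpleGeodesicTriangle (concatPath γ₁ (concatPath γ₂ γ₃ a₂) a₁) a₁ (a₁ + a₂)
      (a₁ + (a₂ + a₃)) :=
    { L_pos := by linarith
      ha := h₁
      hab := by linarith
      hbL := by linarith
      side1 := g₁.concatPath_left
      side2 := by simpa only [add_zero] using g₂.concatPath_left.concatPath_right e₁ le_rfl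
      side3 := by
        simpa only [add_zero] using
          (g₃.concatPath_right e₂₃ le_rfl).concatPath_right e₁ (by linarith)
      closed := by
        rw [concatPath_of_le h₁, concatPath_add e₁ (by linarith), concatPath_add e₂₃ h₃, e₃₁]
      simple := injOn_concatPath e₁ h₁ (by linarith) (g₁.injOn.mono Ico_subset_Icc_self)
        (injOn_concatPath e₂₃ h₂ h₃ (g₂.injOn.mono Ico_subset_Icc_self)
          (g₃.injOn.mono Ico_subset_Icc_self) d₂₃)
        (by rw [concatPath_image_Ico e₂₃ h₂ h₃]; exact disjoint_union_right.2 ⟨d₁₂, d₁₃⟩) }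
  obtain ⟨q, hq, hsub⟩ := hTG.T2 _ _ _ _ htri
  rw [concatPath_image_Icc e₁ h₁ (by linarith), concatPath_image_Icc e₂₃ h₂ h₃] at hsub
  exact ⟨q, hq, hsub⟩

theorem exists_piece_of_isolated_side (hTG : IsTreeGraded P) {α β δ : ℝ → F} {a b d : ℝ}
    (ha : 0 ≤ a) (hb : 0 ≤ b) (hd : 0 < d) (gα : IsGeodesicOn α 0 a) (gβ : IsGeodesicOn β 0 b)
    (gδ : IsGeodesicOn δ 0 d) (hαβ : α a = β 0) (hβδ : β b = δ 0) (hδα : δ d = α 0)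
    (hδ : ∀ t ∈ Ioo 0 d, δ t ∉ α '' Icc 0 a ∪ β '' Icc 0 b) :
    ∃ q ∈ P, ∃ u ∈ Icc 0 b, β u ∈ α '' Icc 0 a ∧ β '' Icc u b ⊆ q ∧ δ '' Icc 0 d ⊆ q := by
  obtain ⟨u, hu, ⟨τ, hτ, hατ⟩, hlast⟩ := exists_last_mem_of_continuousOn hb gβ.continuousOn
    gα.isCompact_image.isClosed ⟨a, right_mem_Icc.2 ha, hαβ⟩
  -- cut `β` at its last visit `u` to `α`: the loop `α|[0,τ]`, `β|[u,b]`, `δ` is then simple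
  have hα_β : ∀ s ∈ Ico 0 τ, ∀ t ∈ Icc u b, α s ≠ β t := by
    intro s hs t ht hst
    rcases ht.1.eq_or_lt with rfl | hut
    · exact hs.2.ne (gα.injOn ⟨hs.1, hs.2.le.trans hτ.2⟩ hτ (hst.trans hατ.symm))
    · exact hlast t ⟨hut, ht.2⟩ ⟨s, ⟨hs.1, hs.2.le.trans hτ.2⟩, hst⟩
  have d₁₂ : Disjoint (α '' Ico 0 τ) ((fun r => β (u + r)) '' Ico 0 (b - u)) := by
    rw [disjoint_left]
    rintro _ ⟨s, hs, rfl⟩ ⟨t, ht, hts⟩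
    exact hα_β s hs (u + t) ⟨by linarith [ht.1], by linarith [ht.2]⟩ hts.symm
  have d₁₃ : Disjoint (α '' Ico 0 τ) (δ '' Ico 0 d) := by
    rw [disjoint_left]
    rintro _ ⟨s, hs, rfl⟩ ⟨t, ht, hts⟩
    rcases ht.1.eq_or_lt with rfl | ht0
    · exact hα_β s hs b ⟨hu.2, le_rfl⟩ (hts.symm.trans hβδ.symm)
    · exact hδ t ⟨ht0, ht.2⟩ (Or.inl ⟨s, ⟨hs.1, hs.2.le.trans hτ.2⟩, hts.symm⟩)
  have d₂₃ : Disjoint ((fun r => β (u + r)) '' Ico 0 (b - u)) (δ '' Ico 0 d) := by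
    rw [disjoint_left]
    rintro _ ⟨s, hs, rfl⟩ ⟨t, ht, hts⟩
    rcases ht.1.eq_or_lt with rfl | ht0
    · have := gβ.injOn ⟨hb, le_rfl⟩ ⟨by linarith [hu.1, hs.1], by linarith [hs.2]⟩
        (hβδ.trans hts)
      linarith [hs.2]
    · exact hδ t ⟨ht0, ht.2⟩
        (Or.inr ⟨u + s, ⟨by linarith [hu.1, hs.1], by linarith [hs.2]⟩, hts.symm⟩)
  obtain ⟨q, hq, hsub⟩ := hTG.exists_piece_of_simple_triangle hτ.1 (sub_nonneg.2 hu.2) hd.le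
    (by linarith [hτ.1, hu.2]) (gα.mono le_rfl hτ.2) (gβ.shift hu.1 le_rfl) gδ
    (by rw [add_zero, hατ]) (by rw [add_sub_cancel, hβδ]) hδα d₁₂ d₁₃ d₂₃
  rw [image_comp_const_add_Icc, union_subset_iff, union_subset_iff] at hsub
  exact ⟨q, hq, u, hu, ⟨τ, hτ, hατ⟩, hsub.2.1, hsub.2.2⟩

theorem exists_piece_of_triangle_tail (hTG : IsTreeGraded P) {h γ k : ℝ → F} {l B K A : ℝ}
    (hl : 0 ≤ l) (hB : 0 ≤ B) (hA : 0 ≤ A) (hAK : A < K) (gh : IsGeodesicOn h 0 l)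
    (gγ : IsGeodesicOn γ 0 B) (gk : IsGeodesicOn k 0 K) (hhγ : h l = γ 0) (hγk : γ B = k K)
    (hkh : k 0 = h 0) (htail : ∀ t ∈ Ico A K, k t ∉ h '' Icc 0 l ∪ γ '' Icc 0 B) :
    ∃ q ∈ P, ∃ r ∈ Ico 0 A, k '' Icc r K ⊆ q := by
  set W := h '' Icc 0 l ∪ γ '' Icc 0 B
  -- `r` is the last time before `A` at which `k` meets `W`; from `k r` the loop closes up
  -- along `h` and then `γ` if `k r` lies on `h`, along `γ` alone otherwise
  obtain ⟨r, hr, hrW, hlast⟩ := exists_last_mem_of_continuousOn hA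
    (gk.continuousOn.mono (Icc_subset_Icc le_rfl hAK.le))
    (gh.isCompact_image.union gγ.isCompact_image).isClosed
    (Or.inl ⟨0, left_mem_Icc.2 hl, hkh.symm⟩)
  have hrA : r < A := hr.2.lt_of_ne fun hrA => htail A ⟨le_rfl, hAK⟩ (hrA ▸ hrW)
  have hδ : ∀ t ∈ Ioo 0 (K - r), k (K - t) ∉ W := fun t ht => by
    rcases le_or_gt (K - t) A with htA | htA
    · exact hlast _ ⟨by linarith [ht.2], htA⟩
    · exact htail _ ⟨htA.le, by linarith [ht.1]⟩
  suffices ∃ q ∈ P, (fun t => k (K - t)) '' Icc 0 (K - r) ⊆ q by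
    rw [image_comp_const_sub_Icc] at this
    obtain ⟨q, hq, hsub⟩ := this
    exact ⟨q, hq, r, ⟨hr.1, hrA⟩, hsub⟩
  have gδ := gk.reverse hr.1 le_rfl
  have hKr : 0 < K - r := by linarith
  rcases hrW with ⟨σ, hσ, hσr⟩ | ⟨v, hv, hvr⟩
  · have hsub : (fun t => h (σ + t)) '' Icc 0 (l - σ) ∪ γ '' Icc 0 B ⊆ W := by
      rw [image_comp_const_add_Icc]
      exact union_subset_union_left _ (image_mono (Icc_subset_Icc hσ.1 le_rfl))
    obtain ⟨q, hq, -, -, -, -, hq'⟩ := hTG.exists_piece_of_isolated_side (sub_nonneg.2 hσ.2) hB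
      hKr (gh.shift hσ.1 le_rfl) gγ gδ (by rw [add_sub_cancel, hhγ]) (by rw [sub_zero, hγk])
      (by rw [sub_sub_cancel, add_zero, hσr]) fun t ht hmem => hδ t ht (hsub hmem)
    exact ⟨q, hq, hq'⟩
  · have hsub : (fun (_ : ℝ) => k r) '' Icc 0 0 ∪ (fun t => γ (v + t)) '' Icc 0 (B - v) ⊆ W := by
      rw [image_comp_const_add_Icc]
      rintro _ (⟨_, _, rfl⟩ | hmem)
      · exact Or.inr ⟨v, hv, hvr⟩
      · exact Or.inr (image_mono (Icc_subset_Icc hv.1 le_rfl) hmem)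
    obtain ⟨q, hq, -, -, -, -, hq'⟩ := hTG.exists_piece_of_isolated_side (α := fun _ => k r)
      le_rfl (sub_nonneg.2 hv.2) hKr (IsGeodesicOn.of_Icc_self _ 0) (gγ.shift hv.1 le_rfl) gδ
      (by rw [add_zero, hvr]) (by rw [add_sub_cancel, hγk, sub_zero]) (by rw [sub_sub_cancel])
      fun t ht hmem => hδ t ht (hsub hmem)
    exact ⟨q, hq, hq'⟩

theorem first_entry_eq (hTG : IsTreeGraded P) (hp : p ∈ P) {α β : ℝ → F} {s₁ s₂ : ℝ}
    (h₁ : 0 ≤ s₁) (h₂ : 0 ≤ s₂) (gα : IsGeodesicOn α 0 s₁) (gβ : IsGeodesicOn β 0 s₂)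
    (h0 : α 0 = β 0) (hα : α s₁ ∈ p) (hβ : β s₂ ∈ p) (hαp : ∀ t ∈ Ico 0 s₁, α t ∉ p)
    (hβp : ∀ t ∈ Ico 0 s₂, β t ∉ p) : α s₁ = β s₂ := by
  by_contra hne
  have hα_eq : ∀ t ∈ Icc 0 s₁, α t ∈ p → t = s₁ := fun t ht htp =>
    by_contra fun hts => hαp t ⟨ht.1, ht.2.lt_of_ne hts⟩ htp
  have hβ_eq : ∀ t ∈ Icc 0 s₂, β t ∈ p → t = s₂ := fun t ht htp =>
    by_contra fun hts => hβp t ⟨ht.1, ht.2.lt_of_ne hts⟩ htp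
  obtain ⟨g, hg0, hg1, gg, hgp⟩ := hTG.pieces_geodesic p hp _ hα _ hβ
  have hg : ∀ t ∈ Ioo 0 (dist (α s₁) (β s₂)),
      g t ∉ (fun r => β (s₂ - r)) '' Icc 0 s₂ ∪ α '' Icc 0 s₁ := by
    intro t ht hmem
    have hgt : g t ∈ p := hgp ⟨t, Ioo_subset_Icc_self ht, rfl⟩
    rcases hmem with ⟨r, hr, hrt : β (s₂ - r) = g t⟩ | ⟨r, hr, hrt⟩
    · rw [hβ_eq (s₂ - r) ⟨by linarith [hr.2], by linarith [hr.1]⟩ (hrt ▸ hgt), ← hg1] at hrt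
      exact ht.2.ne (gg.injOn (Ioo_subset_Icc_self ht) (right_mem_Icc.2 dist_nonneg) hrt.symm)
    · rw [hα_eq r hr (hrt ▸ hgt), ← hg0] at hrt
      exact ht.1.ne (gg.injOn (left_mem_Icc.2 dist_nonneg) (Ioo_subset_Icc_self ht) hrt)
  obtain ⟨q, hq, u, hu, ⟨r, hr, hru : β (s₂ - r) = α u⟩, hαq, hgq⟩ :=
    hTG.exists_piece_of_isolated_side h₂ h₁ (dist_pos.2 hne)
      (by simpa using gβ.reverse le_rfl le_rfl) gα gg (by rw [sub_self, h0]) hg0.symm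
      (by rw [hg1, sub_zero]) hg
  have hpq : p = q := hTG.eq_of_mem_of_mem hp hq hne hα
    (hg0 ▸ hgq ⟨0, left_mem_Icc.2 dist_nonneg, rfl⟩) hβ
    (hg1 ▸ hgq ⟨_, right_mem_Icc.2 dist_nonneg, rfl⟩)
  have hus : u = s₁ := hα_eq u hu (hpq ▸ hαq ⟨u, left_mem_Icc.2 hu.2, rfl⟩)
  subst hus
  rw [hβ_eq (s₂ - r) ⟨by linarith [hr.2], by linarith [hr.1]⟩ (hru ▸ hα)] at hru
  exact hne hru.symm

theorem exists_isGate (hF : GeodesicSpace F) (hTG : IsTreeGraded P) (hp : p ∈ P) (x : F) :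
    ∃ e, IsGate p x e := by
  have entry : ∀ z ∈ p, ∃ γ : ℝ → F, ∃ s ∈ Icc 0 (dist x z), IsGeodesicOn γ 0 (dist x z) ∧
      γ 0 = x ∧ γ (dist x z) = z ∧ γ s ∈ p ∧ ∀ t ∈ Ico 0 s, γ t ∉ p := by
    intro z hz
    obtain ⟨γ, h0, h1, hγ⟩ := hF x z
    obtain ⟨s, hs, hsp, hfirst⟩ := exists_first_mem_of_continuousOn dist_nonneg hγ.continuousOn
      (hTG.pieces_closed p hp) (by rwa [h1])
    exact ⟨γ, s, hs, hγ, h0, h1, hsp, hfirst⟩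
  obtain ⟨z₀, hz₀⟩ := hTG.pieces_nonempty p hp
  obtain ⟨γ₀, s₀, hs₀, hγ₀, h0₀, -, hs₀p, hfirst₀⟩ := entry z₀ hz₀
  refine ⟨γ₀ s₀, hs₀p, fun z hz => ?_⟩
  obtain ⟨γ, s, hs, hγ, h0, h1, hsp, hfirst⟩ := entry z hz
  have hsplit := hγ.dist_add_dist hs
  rw [h0, h1] at hsplit
  rw [hTG.first_entry_eq hp hs₀.1 hs.1 (hγ₀.mono le_rfl hs₀.2) (hγ.mono le_rfl hs.2)
    (h0₀.trans h0.symm) hs₀p hsp hfirst₀ hfirst, hsplit]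

theorem isGate_eq_of_isGeodesicOn (hF : GeodesicSpace F) (hTG : IsTreeGraded P) (hp : p ∈ P)
    {x y ex ey : F} (hx : IsGate p x ex) (hy : IsGate p y ey) {h : ℝ → F} {l : ℝ} (hl : 0 ≤ l)
    (gh : IsGeodesicOn h 0 l) (h0 : h 0 = x) (h1 : h l = y) (havoid : ∀ t ∈ Icc 0 l, h t ∉ p) :
    ex = ey := by
  by_contra hne
  have hA : 0 < dist x ex := dist_pos.2 fun hxe =>
    havoid 0 (left_mem_Icc.2 hl) (by rw [h0, hxe]; exact hx.1)
  have hD : 0 < dist ex ey := dist_pos.2 hne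
  obtain ⟨γ₁, h₁0, h₁1, g₁⟩ := hF x ex
  obtain ⟨γ₂, h₂0, h₂1, g₂⟩ := hF y ey
  obtain ⟨g, hg0, hg1, gg, hgp⟩ := hTG.pieces_geodesic p hp ex hx.1 ey hy.1
  -- `x → ex → ey` is a geodesic because `ex` is the gate of `x`
  set k := concatPath γ₁ g (dist x ex) with hk
  have hj : γ₁ (dist x ex) = g 0 := h₁1.trans hg0.symm
  have gk : IsGeodesicOn k 0 (dist x ex + dist ex ey) :=
    g₁.concatPath_of_dist_eq hj hA.le hD.le gg (by rw [h₁0, hg1]; exact hx.2 ey hy.1)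
  have hkA : k (dist x ex) = ex := by rw [hk, concatPath_of_le le_rfl, h₁1]
  have hkend : k (dist x ex + dist ex ey) = ey := by rw [hk, concatPath_add hj hD.le, hg1]
  have htail : ∀ t ∈ Ico (dist x ex) (dist x ex + dist ex ey),
      k t ∉ h '' Icc 0 l ∪ γ₂ '' Icc 0 (dist y ey) := by
    intro t ht hmem
    have hkt : k t ∈ p := by
      rw [hk, concatPath_of_ge hj ht.1]
      exact hgp ⟨_, ⟨by linarith [ht.1], by linarith [ht.2]⟩, rfl⟩
    rcases hmem with ⟨s, hs, hst⟩ | ⟨s, hs, hst⟩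
    · exact havoid s hs (hst ▸ hkt)
    · have hs_end : s = dist y ey := by_contra fun hs_ne =>
        hy.geodesic_notMem g₂ h₂0 h₂1 s ⟨hs.1, hs.2.lt_of_ne hs_ne⟩ (hst ▸ hkt)
      rw [hs_end, h₂1, ← hkend] at hst
      have := gk.injOn (right_mem_Icc.2 (by linarith)) ⟨by linarith [ht.1], ht.2.le⟩ hst
      linarith [ht.2]
  obtain ⟨q, hq, r, hr, hkq⟩ := hTG.exists_piece_of_triangle_tail hl dist_nonneg hA.le
    (by linarith) gh g₂ gk (h1.trans h₂0.symm) (h₂1.trans hkend.symm)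
    (by rw [hk, concatPath_of_le hA.le, h₁0, h0]) htail
  have hpq : p = q := hTG.eq_of_mem_of_mem hp hq hne hx.1
    (hkA ▸ hkq ⟨_, ⟨hr.2.le, by linarith⟩, rfl⟩) hy.1
    (hkend ▸ hkq ⟨_, ⟨by linarith [hr.2], le_rfl⟩, rfl⟩)
  refine hx.geodesic_notMem g₁ h₁0 h₁1 r hr ?_
  rw [hpq, ← concatPath_of_le (γ₁ := γ₁) (γ₂ := g) hr.2.le]
  exact hkq ⟨r, ⟨le_rfl, by linarith [hr.2]⟩, rfl⟩

theorem isGate_eq_of_dist_lt_infDist (hF : GeodesicSpace F) (hTG : IsTreeGraded P) (hp : p ∈ P)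
    {x y ex ey : F} (hx : IsGate p x ex) (hy : IsGate p y ey) (hxy : dist x y < infDist x p) :
    ex = ey := by
  obtain ⟨h, h0, h1, gh⟩ := hF x y
  refine hTG.isGate_eq_of_isGeodesicOn hF hp hx hy dist_nonneg gh h0 h1 fun t ht htp => ?_
  have hxt : dist x (h t) = t := by
    rw [← h0, gh.dist_eq_sub (left_mem_Icc.2 dist_nonneg) ht ht.1, sub_zero]
  linarith [infDist_le_dist_of_mem (x := x) htp, ht.2]

theorem apply_eq_of_forall_notMem (hF : GeodesicSpace F) (hTG : IsTreeGraded P) (hp : p ∈ P)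
    {c : ℝ → F} {u v : ℝ} (huv : u < v) (hc : ContinuousOn c (Icc u v)) (hu : c u ∈ p)
    (hv : c v ∈ p) (hmid : ∀ s ∈ Ioo u v, c s ∉ p) : c u = c v := by
  choose G hG using fun s => hTG.exists_isGate hF hp (c s)
  have hloc : ∀ s ∈ Ioo u v, ∀ᶠ s' in 𝓝 s, G s' = G s := by
    intro s hs
    have hpos : 0 < infDist (c s) p :=
      ((hTG.pieces_closed p hp).notMem_iff_infDist_pos (hTG.pieces_nonempty p hp)).1 (hmid s hs)
    filter_upwards [(hc.continuousAt (Icc_mem_nhds hs.1 hs.2)).eventually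
      (ball_mem_nhds _ hpos)] with s' hs'
    rw [dist_comm] at hs'
    exact (hTG.isGate_eq_of_dist_lt_infDist hF hp (hG s) (hG s') hs').symm
  obtain ⟨m, hm⟩ := nonempty_Ioo.2 huv
  have hconst : ∀ s ∈ Ioo u v, G s = G m := by
    have : PreconnectedSpace (Ioo u v) := isPreconnected_iff_preconnectedSpace.1 isPreconnected_Ioo
    have hG_loc : IsLocallyConstant fun s : Ioo u v => G s :=
      (IsLocallyConstant.iff_eventually_eq _).2 fun s =>
        (continuous_subtype_val.tendsto s).eventually (hloc s s.2)
    exact fun s hs => hG_loc.apply_eq_of_preconnectedSpace ⟨s, hs⟩ ⟨m, hm⟩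
  have hend : ∀ w, c w ∈ p → (𝓝[Ioo u v] w).NeBot → ContinuousWithinAt c (Ioo u v) w →
      G m = c w := fun w hw _ hcw =>
    eq_of_tendsto_of_dist_le hcw <| eventually_nhdsWithin_of_forall fun s hs => by
      rw [← hconst s hs]
      exact (hG s).dist_le hw
  exact (hend u hu (left_nhdsWithin_Ioo_neBot huv)
    ((hc u (left_mem_Icc.2 huv.le)).mono Ioo_subset_Icc_self)).symm.trans
    (hend v hv (right_nhdsWithin_Ioo_neBot huv)
      ((hc v (right_mem_Icc.2 huv.le)).mono Ioo_subset_Icc_self))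

theorem ordConnected_inter_preimage (hF : GeodesicSpace F) (hTG : IsTreeGraded P) (hp : p ∈ P)
    {c : ℝ → F} {a b : ℝ} (hc : ContinuousOn c (Icc a b)) (hinj : InjOn c (Icc a b)) :
    OrdConnected (Icc a b ∩ c ⁻¹' p) := by
  refine ⟨fun t₁ ht₁ t₂ ht₂ t ht => ?_⟩
  have htab : t ∈ Icc a b := ⟨ht₁.1.1.trans ht.1, ht.2.trans ht₂.1.2⟩
  refine ⟨htab, ?_⟩
  by_contra htp
  have hpc := hTG.pieces_closed p hp
  obtain ⟨u, hu, hup, hu_last⟩ := exists_last_mem_of_continuousOn ht.1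
    (hc.mono (Icc_subset_Icc ht₁.1.1 htab.2)) hpc ht₁.2
  obtain ⟨v, hv, hvp, hv_first⟩ := exists_first_mem_of_continuousOn ht.2
    (hc.mono (Icc_subset_Icc htab.1 ht₂.1.2)) hpc ht₂.2
  have hut : u < t := hu.2.lt_of_ne fun hut => htp (hut ▸ hup)
  have htv : t < v := hv.1.lt_of_ne' fun hvt => htp (hvt ▸ hvp)
  have hcuv : c u = c v := hTG.apply_eq_of_forall_notMem hF hp (hut.trans htv)
    (hc.mono (Icc_subset_Icc (ht₁.1.1.trans hu.1) (hv.2.trans ht₂.1.2))) hup hvp fun s hs =>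
      (le_total s t).elim (fun hst => hu_last s ⟨hs.1, hst⟩) fun hts => hv_first s ⟨hts, hs.2⟩
  exact (hut.trans htv).ne (hinj ⟨ht₁.1.1.trans hu.1, hu.2.trans htab.2⟩
    ⟨htab.1.trans hv.1, hv.2.trans ht₂.1.2⟩ hcuv)

end IsTreeGraded

theorem stmt_1_general {F : Type*} [MetricSpace F] (hF : GeodesicSpace F)
    (P : Set (Set F)) (hTG : IsTreeGraded P) :
    (∀ p ∈ P, ∀ q ∈ P, p ≠ q → (p ∩ q).Subsingleton) ∧
    (∀ (c : ℝ → F) (a b : ℝ), a ≤ b →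
      ContinuousOn c (Set.Icc a b) → Set.InjOn c (Set.Icc a b) →
      ∀ p ∈ P, ¬ (c '' Set.Icc a b ∩ p).Subsingleton →
        ∃ s t : ℝ, a ≤ s ∧ s ≤ t ∧ t ≤ b ∧
          {u : ℝ | u ∈ Set.Icc a b ∧ c u ∈ p} = Set.Icc s t) := by
  refine ⟨hTG.T1, fun c a b _ hc hinj p hp hns => ?_⟩
  set S := Icc a b ∩ c ⁻¹' p
  obtain ⟨_, ⟨u, hu, rfl⟩, hup⟩ := (not_subsingleton_iff.1 hns).nonempty
  have hne : S.Nonempty := ⟨u, hu, hup⟩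
  have hcpt : IsCompact S := isCompact_Icc.of_isClosed_subset
    (hc.preimage_isClosed_of_isClosed isClosed_Icc (hTG.pieces_closed p hp)) inter_subset_left
  have hconn : IsConnected S :=
    ⟨hne, (hTG.ordConnected_inter_preimage hF hp hc hinj).isPreconnected⟩
  exact ⟨sInf S, sSup S, (hcpt.sInf_mem hne).1.1, csInf_le_csSup hne hcpt.bddBelow hcpt.bddAbove,
    (hcpt.sSup_mem hne).1.2, eq_Icc_of_connected_compact hconn hcpt⟩

/-- in a tree-graded space, every two distinct pieces intersect in at most one
point, and the intersection of any topological arc with a piece, if it has more than one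
point, is a sub-arc. -/
theorem stmt_1 {F : Type*} [MetricSpace F] [CompleteSpace F] (hF : GeodesicSpace F)
    (P : Set (Set F)) (hTG : IsTreeGraded P) :
    (∀ p ∈ P, ∀ q ∈ P, p ≠ q → (p ∩ q).Subsingleton) ∧
    (∀ (c : ℝ → F) (a b : ℝ), a ≤ b →
      ContinuousOn c (Set.Icc a b) → Set.InjOn c (Set.Icc a b) →
      ∀ p ∈ P, ¬ (c '' Set.Icc a b ∩ p).Subsingleton →
        ∃ s t : ℝ, a ≤ s ∧ s ≤ t ∧ t ≤ b ∧
          {u : ℝ | u ∈ Set.Icc a b ∧ c u ∈ p} = Set.Icc s t) :=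
  stmt_1_general hF P hTG
end

section
/- Let f, g be two partial functions in the tree product ΠP, and let div(f,g) be the supremum of all s' such that f and g restricted to ]0,s'[ ∩ A_f coincide. Then div(f,g) does not belong to A_f ∪ A_g. -/
open scoped Classical

/-- The set `Ω`: pairs of (distinct) points coming from one of the spaces `M i`. -/
abbrev PairVal (I : Type*) (M : I → Type*) := Σ i : I, M i × M i

/-- An element of the tree product `ΠP` of the family of metric spaces `M i`:
a partial function from a dense open subset of `]0, d[` to `Ω`, encoded as an
`Option`-valued function, satisfying conditions (Π₁)–(Π₅). -/
structure TreeProdFun (I : Type*) (M : I → Type*) [∀ i, MetricSpace (M i)] where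
  /-- the length of the interval of definition -/
  d : ℝ
  d_nonneg : 0 ≤ d
  /-- the partial function; `none` outside the domain -/
  f : ℝ → Option (PairVal I M)
  /-- (Π₁) the domain is contained in `]0, d[` … -/
  dom_sub : ∀ t : ℝ, (f t).isSome → t ∈ Set.Ioo 0 d
  /-- … it is open … -/
  dom_open : IsOpen {t : ℝ | (f t).isSome = true}
  /-- … and dense in `]0, d[`. -/
  dom_dense : Set.Ioo 0 d ⊆ closure {t : ℝ | (f t).isSome = true}
  /-- values are pairs of *distinct* points -/
  distinct : ∀ t i (x y : M i), f t = some ⟨i, (x, y)⟩ → x ≠ y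
  /-- (Π₂) `f` is locally constant on its domain -/
  locConst : ∀ t : ℝ, (f t).isSome → ∀ᶠ s in nhds t, f s = f t
  /-- (Π₃) on a maximal subinterval of the domain with value `(x,y)`, the length of the
  interval equals `dist x y` -/
  intervalLen : ∀ a b : ℝ, a < b → (∀ t ∈ Set.Ioo a b, (f t).isSome) →
    ¬ (f a).isSome → ¬ (f b).isSome →
    ∀ t ∈ Set.Ioo a b, ∀ i (x y : M i), f t = some ⟨i, (x, y)⟩ → dist x y = b - a
  /-- (Π₄) no fake exits: no two consecutive values of the form `(x₁,x₂), (x₂,x₃)` -/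
  noFakeExit : ∀ a b c : ℝ, a < b → b < c →
    (∀ t ∈ Set.Ioo a b, (f t).isSome) → (∀ t ∈ Set.Ioo b c, (f t).isSome) →
    ¬ (f a).isSome → ¬ (f b).isSome → ¬ (f c).isSome →
    ∀ s ∈ Set.Ioo a b, ∀ t ∈ Set.Ioo b c, ∀ i (x y z w : M i),
      f s = some ⟨i, (x, y)⟩ → f t = some ⟨i, (z, w)⟩ → y ≠ z
  /-- (Π₅) no backtracking: `f` never coincides on `]p-q, p+q[` with its reflection at `p`
  composed with swapping the components of the values -/
  noBacktrack : ∀ p q : ℝ, 0 < q → Set.Ioo (p - q) (p + q) ⊆ Set.Ioo 0 d →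
    ¬ ∀ t ∈ Set.Ioo (p - q) (p + q),
        f t = Option.map (fun v : PairVal I M => ⟨v.1, (v.2.2, v.2.1)⟩) (f (2 * p - t))

variable {I : Type*} {M : I → Type*} [∀ i, MetricSpace (M i)]

/-- The domain `A_f` of an element of the tree product. -/
def TreeProdFun.dom (f : TreeProdFun I M) : Set ℝ := {t : ℝ | (f.f t).isSome}

/-- The empty function `f_∅`. -/
def emptyTPF (I : Type*) (M : I → Type*) [∀ i, MetricSpace (M i)] : TreeProdFun I M where
  d := 0
  d_nonneg := le_refl 0
  f := fun _ => none
  dom_sub := by intro t h; simp at h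
  dom_open := by simp
  dom_dense := by simp
  distinct := by intro t i x y h; cases h
  locConst := by intro t h; simp at h
  intervalLen := by intro a b _ _ _ _ t ht i x y h; cases h
  noFakeExit := by intro a b c _ _ _ _ _ _ _ s hs t ht i x y z w h; cases h
  noBacktrack := by
    intro p q hq hsub _
    have hp : p ∈ Set.Ioo (p - q) (p + q) := by constructor <;> linarith
    have := hsub hp
    simp at this

/-- The divergence point `div(f,g)`: the supremum of all `s` such that the restrictions of
`f` and `g` to `]0,s[ ∩ A_f` coincide. -/
noncomputable def divPt (f g : TreeProdFun I M) : ℝ :=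
  sSup {s : ℝ | 0 ≤ s ∧ s ≤ min f.d g.d ∧
    ∀ t ∈ Set.Ioo (0 : ℝ) s, (f.f t).isSome → f.f t = g.f t}

/-- `afterPt f s` is the right endpoint of the maximal (possibly empty) interval
`]s, a[` contained in the domain of `f`; it equals `s` if there is no such interval. -/
noncomputable def afterPt (f : TreeProdFun I M) (s : ℝ) : ℝ :=
  sSup {b : ℝ | s ≤ b ∧ b ≤ max s f.d ∧ ∀ t ∈ Set.Ioo s b, (f.f t).isSome}

/-- Distance between the second coordinates of two values in `Ω` (0 if undefined or in
different spaces; only used when the indices agree). -/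
noncomputable def optSndDist : Option (PairVal I M) → Option (PairVal I M) → ℝ
  | some ⟨i, (_, y)⟩, some ⟨j, (_, w)⟩ =>
      if h : i = j then dist (cast (congrArg M h) y) w else 0
  | _, _ => 0

/-- The two values are defined and have the same first coordinate (`x_g(f) = x_f(g)`). -/
def sameStart : Option (PairVal I M) → Option (PairVal I M) → Prop
  | some ⟨i, (x, _)⟩, some ⟨j, (z, _)⟩ => ∃ h : i = j, cast (congrArg M h) x = z
  | _, _ => False

/-- The distance function `D` on the tree product, defined case-wise: in type 1
(both functions continue after the divergence point in the same piece through the same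
entrance point) via the exit points, in type 2 via the divergence point. -/
noncomputable def Dtp (f g : TreeProdFun I M) : ℝ :=
  if divPt f g < afterPt f (divPt f g) ∧ divPt f g < afterPt g (divPt f g) ∧
      sameStart (f.f ((divPt f g + afterPt f (divPt f g)) / 2))
        (g.f ((divPt f g + afterPt g (divPt f g)) / 2))
  then (f.d - afterPt f (divPt f g)) + (g.d - afterPt g (divPt f g)) +
       optSndDist (f.f ((divPt f g + afterPt f (divPt f g)) / 2))
         (g.f ((divPt f g + afterPt g (divPt f g)) / 2))
  else (f.d - divPt f g) + (g.d - divPt f g)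

/-!
Around a point of its domain, an element of `ΠP` is constant on a maximal open interval, whose
length is, by (Π₃), the distance between the two points of its value. Below `div(f,g)` the two
functions agree. If `div(f,g)` lies in both domains, the maximal intervals through it carry the
same value, so `f` and `g` agree a little beyond `div(f,g)`. Otherwise one function, say `f`, is
undefined at some `c ≤ div(f,g)` inside a maximal interval `]a, b[` of `g`: take `c = div(f,g)`,
or, if only `f` is defined at `div(f,g)`, the left end of its maximal interval there, which the
maximal interval of `g` just below `div(f,g)` must overlap to have the same length. By density `f`
is defined somewhere in `]a, c[`; its maximal interval there carries the value of `g` on `]a, b[`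
but is trapped in `]a, c[`, hence is shorter than (Π₃) demands.
-/

namespace TreeProdFun

structure IsComponent (h : TreeProdFun I M) (a b : ℝ) (v : PairVal I M) : Prop where
  lt : a < b
  left_eq_none : h.f a = none
  right_eq_none : h.f b = none
  eq_some : ∀ t ∈ Set.Ioo a b, h.f t = some v

variable {h h' : TreeProdFun I M} {a b a' b' t : ℝ} {v : PairVal I M}

lemma eq_none_of_notMem_Ioo (h : TreeProdFun I M) (ht : t ∉ Set.Ioo 0 h.d) : h.f t = none :=
  Option.not_isSome_iff_eq_none.1 fun hs => ht (h.dom_sub t hs)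

lemma isClosed_setOf_eq_none (h : TreeProdFun I M) : IsClosed {t | h.f t = none} := by
  simpa [Set.compl_ofPred] using h.dom_open.isClosed_compl

lemma isOpen_setOf_eq_some (h : TreeProdFun I M) (v : PairVal I M) :
    IsOpen {t | h.f t = some v} :=
  isOpen_iff_mem_nhds.2 fun t ht =>
    (h.locConst t (by rw [show h.f t = some v from ht]; rfl)).mono fun _ hs => hs.trans ht

lemma exists_isSome_mem_Ioo (h : TreeProdFun I M) (hab : a < b)
    (hsub : Set.Ioo a b ⊆ Set.Ioo 0 h.d) :
    ∃ t ∈ Set.Ioo a b, (h.f t).isSome := by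
  obtain ⟨t, ht⟩ := Set.nonempty_Ioo.2 hab
  exact mem_closure_iff.1 (h.dom_dense (hsub ht)) _ isOpen_Ioo ht

lemma eq_some_on_Ioo_of_forall_isSome (h : TreeProdFun I M)
    (hsome : ∀ s ∈ Set.Ioo a b, (h.f s).isSome) (ht : t ∈ Set.Ioo a b) (hv : h.f t = some v) :
    ∀ s ∈ Set.Ioo a b, h.f s = some v := by
  have hcover :
      Set.Ioo a b ⊆ {s | h.f s = some v} ∪ ⋃ w, ⋃ (_ : w ≠ v), {s | h.f s = some w} := by
    intro s hs
    obtain ⟨w, hw⟩ := Option.isSome_iff_exists.1 (hsome s hs)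
    by_cases hwv : w = v
    · exact Or.inl (hwv ▸ hw)
    · exact Or.inr (Set.mem_biUnion hwv hw)
  have hdisj : Disjoint {s | h.f s = some v} (⋃ w, ⋃ (_ : w ≠ v), {s | h.f s = some w}) :=
    Set.disjoint_iUnion_right.2 fun _ => Set.disjoint_iUnion_right.2 fun hwv =>
      Set.disjoint_left.2 fun _ hsv hsw => hwv (Option.some_injective _ (hsw.symm.trans hsv))
  exact isPreconnected_Ioo.subset_left_of_subset_union (h.isOpen_setOf_eq_some v)
    (isOpen_iUnion fun w => isOpen_iUnion fun _ => h.isOpen_setOf_eq_some w) hdisj hcover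
    ⟨t, ht, hv⟩

lemma exists_isComponent (h : TreeProdFun I M) (ht : h.f t = some v) :
    ∃ a b, t ∈ Set.Ioo a b ∧ h.IsComponent a b v := by
  have htd : t ∈ Set.Ioo 0 h.d := h.dom_sub t (by rw [ht]; rfl)
  set N := {s | h.f s = none}
  have hne : ∀ {s}, s ∈ N → s ≠ t := fun hs hst => by simp [N, hst, ht] at hs
  have hbdd : BddAbove (N ∩ Set.Iic t) := ⟨t, fun _ hs => hs.2⟩
  have hbdd' : BddBelow (N ∩ Set.Ici t) := ⟨t, fun _ hs => hs.2⟩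
  have ha := (h.isClosed_setOf_eq_none.inter isClosed_Iic).csSup_mem
    ⟨0, h.eq_none_of_notMem_Ioo (by simp), htd.1.le⟩ hbdd
  have hb := (h.isClosed_setOf_eq_none.inter isClosed_Ici).csInf_mem
    ⟨h.d, h.eq_none_of_notMem_Ioo (by simp), htd.2.le⟩ hbdd'
  have hmem : t ∈ Set.Ioo (sSup (N ∩ Set.Iic t)) (sInf (N ∩ Set.Ici t)) :=
    ⟨ha.2.lt_of_ne (hne ha.1), hb.2.lt_of_ne' (hne hb.1)⟩
  have hsome : ∀ s ∈ Set.Ioo (sSup (N ∩ Set.Iic t)) (sInf (N ∩ Set.Ici t)),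
      (h.f s).isSome := by
    intro s ⟨hs₁, hs₂⟩
    by_contra hs
    have hsN : s ∈ N := Option.not_isSome_iff_eq_none.1 hs
    rcases le_total s t with hst | hst
    · exact hs₁.not_ge (le_csSup hbdd ⟨hsN, hst⟩)
    · exact hs₂.not_ge (csInf_le hbdd' ⟨hsN, hst⟩)
  exact ⟨_, _, hmem, hmem.1.trans hmem.2, ha.1, hb.1,
    h.eq_some_on_Ioo_of_forall_isSome hsome hmem ht⟩

namespace IsComponent

lemma Ioo_subset (hc : h.IsComponent a b v) : Set.Ioo a b ⊆ Set.Ioo 0 h.d :=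
  fun t ht => h.dom_sub t (by rw [hc.eq_some t ht]; rfl)

lemma nonneg (hc : h.IsComponent a b v) : 0 ≤ a :=
  ((Set.Ioo_subset_Ioo_iff hc.lt).1 hc.Ioo_subset).1

lemma le_d (hc : h.IsComponent a b v) : b ≤ h.d :=
  ((Set.Ioo_subset_Ioo_iff hc.lt).1 hc.Ioo_subset).2

lemma notMem_Ioo (hc : h.IsComponent a b v) (ht : h.f t = none) : t ∉ Set.Ioo a b :=
  fun hmem => by simp [hc.eq_some t hmem] at ht

lemma dist_eq {i : I} {x y : M i} (hc : h.IsComponent a b ⟨i, (x, y)⟩) : dist x y = b - a := by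
  obtain ⟨t, ht⟩ := Set.nonempty_Ioo.2 hc.lt
  exact h.intervalLen a b hc.lt (fun s hs => by rw [hc.eq_some s hs]; rfl)
    (by simp [hc.left_eq_none]) (by simp [hc.right_eq_none]) t ht i x y (hc.eq_some t ht)

lemma length_eq (hc : h.IsComponent a b v) (hc' : h'.IsComponent a' b' v) : b - a = b' - a' := by
  obtain ⟨i, x, y⟩ := v
  rw [← hc.dist_eq, ← hc'.dist_eq]

end IsComponent

end TreeProdFun

open TreeProdFun

def agreeSet (f g : TreeProdFun I M) : Set ℝ :=
  {s : ℝ | 0 ≤ s ∧ s ≤ min f.d g.d ∧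
    ∀ t ∈ Set.Ioo (0 : ℝ) s, (f.f t).isSome → f.f t = g.f t}

section divPt

variable {f g : TreeProdFun I M} {a b c t : ℝ} {v : PairVal I M}

lemma zero_mem_agreeSet (f g : TreeProdFun I M) : (0 : ℝ) ∈ agreeSet f g :=
  ⟨le_rfl, le_min f.d_nonneg g.d_nonneg, fun _ ht => absurd ht (by simp)⟩

lemma bddAbove_agreeSet (f g : TreeProdFun I M) : BddAbove (agreeSet f g) :=
  ⟨min f.d g.d, fun _ hs => hs.2.1⟩

lemma le_divPt (hs : b ∈ agreeSet f g) : b ≤ divPt f g :=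
  le_csSup (bddAbove_agreeSet f g) hs

lemma divPt_mem_agreeSet (f g : TreeProdFun I M) : divPt f g ∈ agreeSet f g := by
  refine ⟨le_divPt (zero_mem_agreeSet f g),
    csSup_le ⟨0, zero_mem_agreeSet f g⟩ fun _ hs => hs.2.1, fun t ht hft => ?_⟩
  obtain ⟨s, hs, hts⟩ := exists_lt_of_lt_csSup ⟨0, zero_mem_agreeSet f g⟩ ht.2
  exact hs.2.2 t ⟨ht.1, hts⟩ hft

lemma divPt_le_left (f g : TreeProdFun I M) : divPt f g ≤ f.d :=
  (divPt_mem_agreeSet f g).2.1.trans (min_le_left _ _)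

lemma right_eq_some_of_lt_divPt (ht : t < divPt f g) (hft : f.f t = some v) : g.f t = some v := by
  have htpos := (f.dom_sub t (by rw [hft]; rfl)).1
  rw [← hft, (divPt_mem_agreeSet f g).2.2 t ⟨htpos, ht⟩ (by rw [hft]; rfl)]

lemma false_of_isComponent_right (hg : g.IsComponent a b v) (hac : a < c) (hcb : c < b)
    (hcD : c ≤ divPt f g) (hfc : f.f c = none) : False := by
  obtain ⟨t, ⟨hat, htc⟩, hft⟩ := f.exists_isSome_mem_Ioo hac
    (Set.Ioo_subset_Ioo hg.nonneg (hcD.trans (divPt_le_left f g)))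
  have hfv : f.f t = some v := by
    rw [(divPt_mem_agreeSet f g).2.2 t ⟨hg.nonneg.trans_lt hat, htc.trans_le hcD⟩ hft,
      hg.eq_some t ⟨hat, htc.trans hcb⟩]
  obtain ⟨a', b', ⟨ha't, htb'⟩, hf⟩ := f.exists_isComponent hfv
  have hb'c : b' ≤ c := not_lt.1 fun hcb' => hf.notMem_Ioo hfc ⟨htc.trans' ha't, hcb'⟩
  have haa' : a ≤ a' := not_lt.1 fun ha'a => absurd
    (right_eq_some_of_lt_divPt (hac.trans_le hcD) (hf.eq_some a ⟨ha'a, hat.trans htb'⟩))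
    (by simp [hg.left_eq_none])
  linarith [hf.length_eq hg]

lemma divPt_notMem_dom_inter (f g : TreeProdFun I M) : divPt f g ∉ f.dom ∩ g.dom := by
  rintro ⟨hf, hg⟩
  obtain ⟨v, hv⟩ := Option.isSome_iff_exists.1 hf
  obtain ⟨w, hw⟩ := Option.isSome_iff_exists.1 hg
  obtain ⟨a, b, ⟨haD, hDb⟩, hfc⟩ := f.exists_isComponent hv
  obtain ⟨a', b', ⟨ha'D, hDb'⟩, hgc⟩ := g.exists_isComponent hw
  obtain ⟨t, ht, htD⟩ := exists_between (max_lt haD ha'D)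
  have hgtv : g.f t = some v := right_eq_some_of_lt_divPt htD
    (hfc.eq_some t ⟨(le_max_left _ _).trans_lt ht, htD.trans hDb⟩)
  have hvw : v = w := Option.some_injective _ <|
    hgtv.symm.trans (hgc.eq_some t ⟨(le_max_right _ _).trans_lt ht, htD.trans hDb'⟩)
  have hmem : min b b' ∈ agreeSet f g := by
    refine ⟨le_min (hfc.nonneg.trans hfc.lt.le) (hgc.nonneg.trans hgc.lt.le),
      min_le_min hfc.le_d hgc.le_d, fun s hs hfs => ?_⟩
    rcases lt_or_ge s (divPt f g) with hsD | hDs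
    · exact (divPt_mem_agreeSet f g).2.2 s ⟨hs.1, hsD⟩ hfs
    · rw [hfc.eq_some s ⟨haD.trans_le hDs, hs.2.trans_le (min_le_left _ _)⟩,
        hgc.eq_some s ⟨ha'D.trans_le hDs, hs.2.trans_le (min_le_right _ _)⟩, hvw]
  exact (lt_min hDb hDb').not_ge (le_divPt hmem)

lemma divPt_notMem_dom_left_of_eq_none (hgD : g.f (divPt f g) = none) : divPt f g ∉ f.dom := by
  intro hf
  obtain ⟨v, hv⟩ := Option.isSome_iff_exists.1 hf
  obtain ⟨a, b, ⟨haD, hDb⟩, hfc⟩ := f.exists_isComponent hv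
  obtain ⟨t, hat, htD⟩ := exists_between haD
  obtain ⟨a', b', ⟨ha't, htb'⟩, hgc⟩ :=
    g.exists_isComponent (right_eq_some_of_lt_divPt htD (hfc.eq_some t ⟨hat, htD.trans hDb⟩))
  have hb'D : b' ≤ divPt f g := not_lt.1 fun hDb' => hgc.notMem_Ioo hgD ⟨ha't.trans htD, hDb'⟩
  rcases lt_or_ge a' a with ha'a | haa'
  · exact false_of_isComponent_right hgc ha'a (hat.trans htb') haD.le hfc.left_eq_none
  · linarith [hfc.length_eq hgc]

lemma divPt_notMem_dom_right_of_eq_none (hfD : f.f (divPt f g) = none) : divPt f g ∉ g.dom := by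
  intro hg
  obtain ⟨v, hv⟩ := Option.isSome_iff_exists.1 hg
  obtain ⟨a, b, ⟨haD, hDb⟩, hgc⟩ := g.exists_isComponent hv
  exact false_of_isComponent_right hgc haD hDb le_rfl hfD

end divPt

/-- the divergence point of two elements of the tree product belongs to
neither of their domains. -/
theorem stmt_5 (f g : TreeProdFun I M) : divPt f g ∉ f.dom ∪ g.dom := by
  have hinter := divPt_notMem_dom_inter f g
  rintro (hf | hg)
  · exact divPt_notMem_dom_left_of_eq_none
      (Option.not_isSome_iff_eq_none.1 fun hg => hinter ⟨hf, hg⟩) hf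
  · exact divPt_notMem_dom_right_of_eq_none
      (Option.not_isSome_iff_eq_none.1 fun hf => hinter ⟨hf, hg⟩) hg
end

section
/- The tree product ΠP with the metric D is a complete metric space: every Cauchy sequence in ΠP converges. -/
open scoped Classical

variable {I : Type*} {M : I → Type*} [∀ i, MetricSpace (M i)]

/-!
The lengths `d(u n)` converge, say to `d∞`. If for every `r < d∞` the `u n` eventually coincide
on `]0, r[`, the limit is glued from these common prefixes. Otherwise they keep disagreeing
before some `ts < d∞`. Since `D(u m, u n)` is small while both functions run far beyond `ts`,
such a disagreement is of type 1: both functions end with pieces that enter through the same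
point, start before `ts` and reach nearly to their ends. Condition (Π₃) pins down where such a
piece starts, so eventually all `u n` share a prefix up to a common `γ`, followed by a piece
from a common `x` to exits `y n` that form a Cauchy sequence. The limit is the common prefix
followed by a single piece from `x` to `lim y n`.

In both cases everything that is eventually `D`-close to the `u n` is `D`-close to the limit;
this gives convergence without the triangle inequality for `D`.
-/

open Set Filter Topology

lemma IsOpen.ordConnectedComponent {U : Set ℝ} (hU : IsOpen U) (t : ℝ) :
    IsOpen (Set.ordConnectedComponent U t) := by
  refine isOpen_iff_mem_nhds.2 fun y hy => ?_
  rw [ordConnectedComponent_eq (mem_ordConnectedComponent.1 hy)]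
  exact ordConnectedComponent_mem_nhds.2 (hU.mem_nhds (ordConnectedComponent_subset hy))

lemma IsOpen.exists_maximal_Ioo {U : Set ℝ} (hU : IsOpen U) (hbel : BddBelow U)
    (habv : BddAbove U) {t : ℝ} (ht : t ∈ U) :
    ∃ a b, t ∈ Ioo a b ∧ Ioo a b ⊆ U ∧ a ∉ U ∧ b ∉ U := by
  have hCopen := hU.ordConnectedComponent t
  set C := Set.ordConnectedComponent U t
  have hCU : C ⊆ U := ordConnectedComponent_subset
  have htC : t ∈ C := self_mem_ordConnectedComponent.2 ht
  replace hbel : BddBelow C := hbel.mono hCU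
  replace habv : BddAbove C := habv.mono hCU
  have hIoo : Ioo (sInf C) (sSup C) ⊆ C :=
    IsConnected.Ioo_csInf_csSup_subset ⟨⟨t, htC⟩, OrdConnected.isPreconnected inferInstance⟩
      hbel habv
  obtain ⟨l, r, ⟨hlt, htr⟩, hlr⟩ := mem_nhds_iff_exists_Ioo_subset.1 (hCopen.mem_nhds htC)
  have htmem : t ∈ Ioo (sInf C) (sSup C) :=
    ⟨(csInf_le hbel (hlr ⟨by linarith, by linarith⟩ : (l + t) / 2 ∈ C)).trans_lt (by linarith),
      (le_csSup habv (hlr ⟨by linarith, by linarith⟩ : (t + r) / 2 ∈ C)).trans_lt' (by linarith)⟩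
  -- an endpoint lying in `U` would belong to the open set `C`, of which it is an extremum
  refine ⟨sInf C, sSup C, htmem, hIoo.trans hCU, fun ha => ?_, fun hb => ?_⟩
  · have hmem : sInf C ∈ C := mem_ordConnectedComponent.2 fun s hs => by
      rw [uIcc_of_ge htmem.1.le] at hs
      rcases hs.1.eq_or_lt with rfl | hlt
      exacts [ha, hCU (hIoo ⟨hlt, hs.2.trans_lt htmem.2⟩)]
    obtain ⟨l', r', ⟨hl', hr'⟩, hsub⟩ := mem_nhds_iff_exists_Ioo_subset.1 (hCopen.mem_nhds hmem)
    have := csInf_le hbel (hsub ⟨by linarith, by linarith⟩ : (l' + sInf C) / 2 ∈ C)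
    linarith
  · have hmem : sSup C ∈ C := mem_ordConnectedComponent.2 fun s hs => by
      rw [uIcc_of_le htmem.2.le] at hs
      rcases hs.2.eq_or_lt with rfl | hlt
      exacts [hb, hCU (hIoo ⟨htmem.1.trans_le hs.1, hlt⟩)]
    obtain ⟨l', r', ⟨hl', hr'⟩, hsub⟩ := mem_nhds_iff_exists_Ioo_subset.1 (hCopen.mem_nhds hmem)
    have := le_csSup habv (hsub ⟨by linarith, by linarith⟩ : (sSup C + r') / 2 ∈ C)
    linarith

namespace TreeProdFun

/-! ### Pieces -/

section Basic

variable (f : TreeProdFun I M)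

lemma mem_Ioo_of_isSome {t : ℝ} (h : (f.f t).isSome) : t ∈ Ioo 0 f.d := f.dom_sub t h

lemma eq_none_of_notMem {t : ℝ} (h : t ∉ Ioo 0 f.d) : f.f t = none :=
  Option.not_isSome_iff_eq_none.1 fun hs => h (f.mem_Ioo_of_isSome hs)

lemma exists_isSome_mem_Ioo_s8 {a b : ℝ} (hab : a < b) (ha : 0 ≤ a) (hb : b ≤ f.d) :
    ∃ t ∈ Ioo a b, (f.f t).isSome := by
  have hmid : (a + b) / 2 ∈ closure f.dom := f.dom_dense ⟨by linarith, by linarith⟩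
  obtain ⟨t, ht, hts⟩ := _root_.mem_closure_iff.1 hmid (Ioo a b) isOpen_Ioo
    ⟨by linarith, by linarith⟩
  exact ⟨t, ht, hts⟩

lemma apply_eq_of_isPreconnected {s : Set ℝ} (hs : IsPreconnected s) (hsub : s ⊆ f.dom)
    {t u : ℝ} (ht : t ∈ s) (hu : u ∈ s) : f.f t = f.f u := by
  let _ : TopologicalSpace (Option (PairVal I M)) := ⊥
  have : DiscreteTopology (Option (PairVal I M)) := ⟨rfl⟩
  refine hs.constant (fun x hx => ?_) ht hu
  exact (continuousAt_const.congr ((f.locConst x (hsub hx)).mono fun _ h => h.symm))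
    |>.continuousWithinAt

end Basic

/-- `]a, b[` is a maximal interval of the domain of `f`, and `v` is the value of `f` on it. -/
structure IsPiece (f : TreeProdFun I M) (a b : ℝ) (v : PairVal I M) : Prop where
  lt : a < b
  left : f.f a = none
  right : f.f b = none
  eq : ∀ t ∈ Ioo a b, f.f t = some v

namespace IsPiece

variable {f : TreeProdFun I M} {a b : ℝ} {v : PairVal I M}

lemma isSome (h : IsPiece f a b v) {t : ℝ} (ht : t ∈ Ioo a b) : (f.f t).isSome := by
  rw [h.eq t ht]; rfl

lemma le_left (h : IsPiece f a b v) {p : ℝ} (hp : f.f p = none) (hpb : p < b) : p ≤ a := by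
  by_contra! hap
  simpa [hp] using h.isSome ⟨hap, hpb⟩

lemma right_le (h : IsPiece f a b v) {q : ℝ} (hq : f.f q = none) (haq : a < q) : b ≤ q := by
  by_contra! hqb
  simpa [hq] using h.isSome ⟨haq, hqb⟩

lemma mid_mem (h : IsPiece f a b v) : (a + b) / 2 ∈ Ioo a b :=
  ⟨by linarith [h.lt], by linarith [h.lt]⟩

lemma nonneg (h : IsPiece f a b v) : 0 ≤ a :=
  h.le_left (f.eq_none_of_notMem fun h0 => lt_irrefl _ h0.1)
    ((f.mem_Ioo_of_isSome (h.isSome h.mid_mem)).1.trans h.mid_mem.2)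

lemma le_d (h : IsPiece f a b v) : b ≤ f.d :=
  h.right_le (f.eq_none_of_notMem fun hd => lt_irrefl _ hd.2)
    (h.mid_mem.1.trans (f.mem_Ioo_of_isSome (h.isSome h.mid_mem)).2)

lemma dist_eq {i : I} {x y : M i} (h : IsPiece f a b ⟨i, (x, y)⟩) : dist x y = b - a :=
  f.intervalLen a b h.lt (fun _ ht => h.isSome ht) (by simp [h.left]) (by simp [h.right])
    _ h.mid_mem _ _ _ (h.eq _ h.mid_mem)

lemma unique (h : IsPiece f a b v) {a' b' : ℝ} {v' : PairVal I M} (h' : IsPiece f a' b' v')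
    {t : ℝ} (ht : t ∈ Ioo a b) (ht' : t ∈ Ioo a' b') : a = a' ∧ b = b' ∧ v = v' := by
  refine ⟨le_antisymm (h'.le_left h.left (ht.1.trans ht'.2)) (h.le_left h'.left
    (ht'.1.trans ht.2)), le_antisymm (h.right_le h'.right (ht.1.trans ht'.2))
    (h'.right_le h.right (ht'.1.trans ht.2)), ?_⟩
  simpa using (h.eq t ht).symm.trans (h'.eq t ht')

lemma ne_of_consecutive {c : ℝ} {i : I} {x y z w : M i} (h₁ : IsPiece f a b ⟨i, (x, y)⟩)
    (h₂ : IsPiece f b c ⟨i, (z, w)⟩) : y ≠ z :=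
  f.noFakeExit a b c h₁.lt h₂.lt (fun _ ht => h₁.isSome ht) (fun _ ht => h₂.isSome ht)
    (by simp [h₁.left]) (by simp [h₁.right]) (by simp [h₂.right]) _ h₁.mid_mem _ h₂.mid_mem
    i x y z w (h₁.eq _ h₁.mid_mem) (h₂.eq _ h₂.mid_mem)

lemma of_eqOn_Iic {g : TreeProdFun I M} {r : ℝ} (h : EqOn f.f g.f (Iic r))
    (hg : IsPiece g a b v) (hbr : b ≤ r) : IsPiece f a b v :=
  ⟨hg.lt, (h (hg.lt.le.trans hbr)).trans hg.left, (h hbr).trans hg.right,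
    fun t ht => (h (ht.2.le.trans hbr)).trans (hg.eq t ht)⟩

end IsPiece

lemma exists_isPiece (f : TreeProdFun I M) {t : ℝ} {v : PairVal I M} (ht : f.f t = some v) :
    ∃ a b, t ∈ Ioo a b ∧ IsPiece f a b v := by
  have hbdd : f.dom ⊆ Ioo 0 f.d := fun s hs => f.mem_Ioo_of_isSome hs
  obtain ⟨a, b, htab, hsub, ha, hb⟩ := f.dom_open.exists_maximal_Ioo
    ⟨0, fun s hs => (hbdd hs).1.le⟩ ⟨f.d, fun s hs => (hbdd hs).2.le⟩
    (show t ∈ f.dom by simp [TreeProdFun.dom, ht])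
  refine ⟨a, b, htab, htab.1.trans htab.2, ?_, ?_, fun s hs => ?_⟩
  · simpa [TreeProdFun.dom] using ha
  · simpa [TreeProdFun.dom] using hb
  · rw [← ht]
    exact f.apply_eq_of_isPreconnected isPreconnected_Ioo hsub hs htab

lemma exists_isPiece_of_Ioo {f : TreeProdFun I M} {t a c : ℝ} {v : PairVal I M}
    (hv : f.f t = some v) (ha : f.f a = none) (hat : a < t) (htc : t < c)
    (hsub : ∀ s ∈ Ioo a c, (f.f s).isSome) : ∃ b, c ≤ b ∧ IsPiece f a b v := by
  obtain ⟨a', b, ht, hP⟩ := f.exists_isPiece hv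
  have ha' : a' = a := by
    refine le_antisymm (not_lt.1 fun h => ?_) (hP.le_left ha (hat.trans ht.2))
    simpa [hP.left] using hsub a' ⟨h, ht.1.trans htc⟩
  refine ⟨b, not_lt.1 fun h => ?_, ha' ▸ hP⟩
  simpa [hP.right] using hsub b ⟨hat.trans ht.2, h⟩

lemma IsPiece.not_forall_eq_before {g : TreeProdFun I M} {γ b c : ℝ} {i : I} {x y z : M i}
    (hP : IsPiece g γ b ⟨i, (x, y)⟩) (hc : c < γ) :
    ¬ ∀ u ∈ Ioo c γ, g.f u = some ⟨i, (z, x)⟩ := by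
  intro h
  obtain ⟨a', b', hu', hP'⟩ := g.exists_isPiece (h ((c + γ) / 2) ⟨by linarith, by linarith⟩)
  have hb' : b' = γ := le_antisymm (hP'.right_le hP.left (hu'.1.trans (by linarith)))
    (not_lt.1 fun hlt => by simpa [hP'.right] using h b' ⟨by linarith [hu'.2], hlt⟩)
  rw [hb'] at hP'
  exact hP'.ne_of_consecutive hP rfl

/-! ### Agreement and the divergence point -/

section Agreement

variable {f g : TreeProdFun I M}

/-- The condition in the definition of `divPt f g`: on `]0, r[`, `g` agrees with `f` wherever
`f` is defined. -/
def AgreeOnDom (f g : TreeProdFun I M) (r : ℝ) : Prop :=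
  ∀ t ∈ Ioo 0 r, (f.f t).isSome → f.f t = g.f t

namespace AgreeOnDom

variable {r s : ℝ}

lemma mono (h : AgreeOnDom f g r) (hsr : s ≤ r) : AgreeOnDom f g s :=
  fun t ht => h t ⟨ht.1, ht.2.trans_le hsr⟩

lemma trans_eqOn {k : TreeProdFun I M} (h : AgreeOnDom f g r) (hgk : EqOn g.f k.f (Iio r)) :
    AgreeOnDom f k r :=
  fun t ht hs => (h t ht hs).trans (hgk ht.2)

lemma eq_none (h : AgreeOnDom f g r) {p : ℝ} (hpr : p < r) (hp : g.f p = none) :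
    f.f p = none := by
  rcases le_or_gt p 0 with hp0 | hp0
  · exact f.eq_none_of_notMem fun hm => (hm.1.trans_le hp0).false
  · by_contra hne
    exact hne ((h p ⟨hp0, hpr⟩ (Option.isSome_iff_ne_none.2 hne)).trans hp)

lemma eqOn (h : AgreeOnDom f g r) (h' : AgreeOnDom g f r) : EqOn f.f g.f (Iio r) := by
  intro t ht
  rcases le_or_gt t 0 with ht0 | ht0
  · rw [f.eq_none_of_notMem fun hm => (hm.1.trans_le ht0).false,
      g.eq_none_of_notMem fun hm => (hm.1.trans_le ht0).false]
  · by_cases hf : (f.f t).isSome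
    · exact h t ⟨ht0, ht⟩ hf
    · by_cases hg : (g.f t).isSome
      · exact (h' t ⟨ht0, ht⟩ hg).symm
      · rw [Option.not_isSome_iff_eq_none.1 hf, Option.not_isSome_iff_eq_none.1 hg]

/-- By (Π₃), `f` cannot stop inside a piece of `g`: its own piece there would be too short. -/
lemma isSome_of_isPiece (h : AgreeOnDom f g s) {α β : ℝ} {v : PairVal I M}
    (hg : IsPiece g α β v) {p : ℝ} (hp : p ∈ Ioo α β) (hps : p ≤ s) (hpd : p ≤ f.d) :
    (f.f p).isSome := by
  obtain ⟨i, x, y⟩ := v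
  by_contra hfp
  rw [Option.not_isSome_iff_eq_none] at hfp
  obtain ⟨t, ht, hts⟩ := f.exists_isSome_mem_Ioo_s8 hp.1 hg.nonneg hpd
  have hft : f.f t = some ⟨i, (x, y)⟩ :=
    (h t ⟨hg.nonneg.trans_lt ht.1, ht.2.trans_le hps⟩ hts).trans
      (hg.eq t ⟨ht.1, ht.2.trans hp.2⟩)
  obtain ⟨α', β', ht', hf⟩ := f.exists_isPiece hft
  have hβ' : β' ≤ p := hf.right_le hfp (ht'.1.trans ht.2)
  have hα' : α ≤ α' :=
    hf.le_left (h.eq_none (hp.1.trans_le hps) hg.left) (ht.1.trans ht'.2)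
  linarith [hf.dist_eq, hg.dist_eq, hp.2]

lemma isPiece (h : AgreeOnDom f g s) {a b : ℝ} {v : PairVal I M} (hg : IsPiece g a b v)
    (has : a < s) (hsd : s ≤ f.d) : IsPiece f a b v := by
  obtain ⟨i, x, y⟩ := v
  obtain ⟨t, ht, hts⟩ := f.exists_isSome_mem_Ioo_s8 (lt_min hg.lt has) hg.nonneg
    ((min_le_right _ _).trans hsd)
  have hts' : t < s := ht.2.trans_le (min_le_right _ _)
  have htb : t < b := ht.2.trans_le (min_le_left _ _)
  have hft : f.f t = some ⟨i, (x, y)⟩ :=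
    (h t ⟨hg.nonneg.trans_lt ht.1, hts'⟩ hts).trans (hg.eq t ⟨ht.1, htb⟩)
  obtain ⟨a', b', ht', hf⟩ := f.exists_isPiece hft
  have ha : a' = a := by
    refine le_antisymm (not_lt.1 fun hlt => ?_) (hf.le_left (h.eq_none has hg.left)
      (ht.1.trans ht'.2))
    simpa [hf.left] using h.isSome_of_isPiece hg ⟨hlt, ht'.1.trans htb⟩
      (ht'.1.trans hts').le ((ht'.1.trans hts').le.trans hsd)
  have hb : b' = b := by linarith [hf.dist_eq, hg.dist_eq]
  exact ha ▸ hb ▸ hf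

lemma eq_of_isPiece (h : AgreeOnDom f g s) {af bf ag bg t : ℝ} {v w : PairVal I M}
    (hf : IsPiece f af bf v) (hg : IsPiece g ag bg w) (htf : t ∈ Ioo af bf) (htg : t ∈ Ioo ag bg)
    (hts : t < s) : v = w := by
  simpa using (hf.eq t htf).symm.trans
    ((h t ⟨hf.nonneg.trans_lt htf.1, hts⟩ (hf.isSome htf)).trans (hg.eq t htg))

/-- Otherwise `f` would stop at `γf` inside a piece of `g` (for `γf < γg`, inside the piece of
`g` copying the beginning of the piece of `f`), against `isSome_of_isPiece`. -/
lemma start_eq (h : AgreeOnDom f g s) {γf γg af ag : ℝ} {i : I} {x yf yg : M i}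
    (hf : IsPiece f γf af ⟨i, (x, yf)⟩) (hg : IsPiece g γg ag ⟨i, (x, yg)⟩)
    (hγf : γf ≤ s) (hγg : γg ≤ s) (hsf : s < af) (hsg : s < ag) : γf = γg := by
  have hsd : s ≤ f.d := hsf.le.trans hf.le_d
  rcases lt_trichotomy γf γg with hlt | heq | hlt
  · obtain ⟨t, ht1, ht2⟩ := exists_between hlt
    have ht : t ∈ Ioo γf af := ⟨ht1, by linarith⟩
    have hgt : g.f t = some ⟨i, (x, yf)⟩ :=
      (h t ⟨hf.nonneg.trans_lt ht.1, by linarith⟩ (hf.isSome ht)).symm.trans (hf.eq t ht)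
    obtain ⟨α, β, htαβ, hP⟩ := g.exists_isPiece hgt
    have hβ : β ≤ γg := hP.right_le hg.left (htαβ.1.trans (by linarith))
    have hα : α < γf := by linarith [hP.dist_eq, hf.dist_eq, htαβ.2]
    simpa [hf.left] using h.isSome_of_isPiece hP ⟨hα, by linarith [htαβ.2]⟩ hγf
      (hγf.trans hsd)
  · exact heq
  · simpa [hf.left] using h.isSome_of_isPiece hg ⟨hlt, hγf.trans_lt hsg⟩ hγf (hγf.trans hsd)

end AgreeOnDom

lemma _root_.Set.EqOn.agreeOnDom {r : ℝ} (h : EqOn f.f g.f (Iio r)) : AgreeOnDom f g r :=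
  fun _ ht _ => h ht.2

lemma divPt_set_nonempty (f g : TreeProdFun I M) :
    {s : ℝ | 0 ≤ s ∧ s ≤ min f.d g.d ∧ AgreeOnDom f g s}.Nonempty :=
  ⟨0, le_rfl, le_min f.d_nonneg g.d_nonneg, fun _ ht => (ht.1.trans ht.2).false.elim⟩

lemma divPt_bddAbove (f g : TreeProdFun I M) :
    BddAbove {s : ℝ | 0 ≤ s ∧ s ≤ min f.d g.d ∧ AgreeOnDom f g s} :=
  ⟨min f.d g.d, fun _ hs => hs.2.1⟩

lemma agreeOnDom_divPt (f g : TreeProdFun I M) : AgreeOnDom f g (divPt f g) := by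
  intro t ht hs
  obtain ⟨s, hs', hts⟩ := exists_lt_of_lt_csSup (divPt_set_nonempty f g) ht.2
  exact hs'.2.2 t ⟨ht.1, hts⟩ hs

lemma divPt_nonneg (f g : TreeProdFun I M) : 0 ≤ divPt f g :=
  le_csSup (divPt_bddAbove f g)
    ⟨le_rfl, le_min f.d_nonneg g.d_nonneg, fun _ ht => (ht.1.trans ht.2).false.elim⟩

lemma le_divPt {r : ℝ} (hf : r ≤ f.d) (hg : r ≤ g.d) (h : AgreeOnDom f g r) :
    r ≤ divPt f g := by
  rcases le_or_gt 0 r with h0 | h0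
  · exact le_csSup (divPt_bddAbove f g) ⟨h0, le_min hf hg, h⟩
  · exact h0.le.trans (divPt_nonneg f g)

lemma divPt_le_min (f g : TreeProdFun I M) : divPt f g ≤ min f.d g.d :=
  csSup_le (divPt_set_nonempty f g) fun _ hs => hs.2.1

lemma divPt_le_left (f g : TreeProdFun I M) : divPt f g ≤ f.d :=
  (divPt_le_min f g).trans (min_le_left _ _)

lemma divPt_le_right (f g : TreeProdFun I M) : divPt f g ≤ g.d :=
  (divPt_le_min f g).trans (min_le_right _ _)

lemma afterPt_eq {s b : ℝ} (hsb : s < b) (hsub : ∀ t ∈ Ioo s b, (f.f t).isSome)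
    (hb : f.f b = none) : afterPt f s = b := by
  have hbd : b ≤ f.d := by
    by_contra! hdb
    have hmid := f.mem_Ioo_of_isSome
      (hsub _ ⟨by linarith, by linarith⟩ : (f.f ((s + b) / 2)).isSome)
    simpa [f.eq_none_of_notMem fun h => lt_irrefl _ h.2] using
      hsub f.d ⟨by linarith [hmid.2], hdb⟩
  refine le_antisymm (csSup_le ⟨b, hsb.le, hbd.trans (le_max_right _ _), hsub⟩ fun b' hb' => ?_)
    (le_csSup ⟨max s f.d, fun _ h => h.2.1⟩ ⟨hsb.le, hbd.trans (le_max_right _ _), hsub⟩)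
  by_contra! hlt
  simpa [hb] using hb'.2.2 b ⟨hsb, hlt⟩

lemma exists_isPiece_afterPt {s : ℝ} (h : s < afterPt f s) :
    ∃ a v, a ≤ s ∧ IsPiece f a (afterPt f s) v := by
  obtain ⟨b', hb', hmb'⟩ := exists_lt_of_lt_csSup (⟨s, le_rfl, le_max_left _ _, by simp⟩ :
    {b : ℝ | s ≤ b ∧ b ≤ max s f.d ∧ ∀ t ∈ Ioo s b, (f.f t).isSome}.Nonempty)
    (show (s + afterPt f s) / 2 < afterPt f s by linarith)
  have hm : (f.f ((s + afterPt f s) / 2)).isSome := hb'.2.2 _ ⟨by linarith, hmb'⟩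
  obtain ⟨v, hv⟩ := Option.isSome_iff_exists.1 hm
  obtain ⟨a, b, hab, hP⟩ := f.exists_isPiece hv
  have has : a ≤ s := not_lt.1 fun hsa => by
    simpa [hP.left] using hb'.2.2 a ⟨hsa, hab.1.trans hmb'⟩
  have hb : afterPt f s = b := afterPt_eq (by linarith [hab.2, hab.1])
    (fun t ht => hP.isSome ⟨has.trans_lt ht.1, ht.2⟩) hP.right
  exact ⟨a, v, has, hb ▸ hP⟩

end Agreement

/-! ### The distance `D` -/

section Distance

variable {f g : TreeProdFun I M}

lemma Dtp_cases (f g : TreeProdFun I M) :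
    Dtp f g = f.d + g.d - 2 * divPt f g ∨
    ∃ (γ af ag : ℝ) (i : I) (x yf yg : M i), γ ≤ divPt f g ∧ divPt f g < af ∧
      divPt f g < ag ∧ IsPiece f γ af ⟨i, (x, yf)⟩ ∧ IsPiece g γ ag ⟨i, (x, yg)⟩ ∧
      Dtp f g = (f.d - af) + (g.d - ag) + dist yf yg := by
  unfold Dtp
  split_ifs with h
  · right
    obtain ⟨hf, hg, hss⟩ := h
    obtain ⟨a, ⟨i, x, yf⟩, haf, hPf⟩ := exists_isPiece_afterPt hf
    obtain ⟨b, ⟨j, x', yg⟩, hbg, hPg⟩ := exists_isPiece_afterPt hg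
    rw [hPf.eq _ ⟨by linarith, by linarith⟩, hPg.eq _ ⟨by linarith, by linarith⟩] at hss ⊢
    obtain ⟨rfl, hx⟩ := hss
    obtain rfl : x = x' := hx
    obtain rfl := (agreeOnDom_divPt f g).start_eq hPf hPg haf hbg hf hg
    exact ⟨a, _, _, i, x, yf, yg, haf, hf, hg, hPf, hPg, by simp [optSndDist]⟩
  · left
    ring

lemma Dtp_eq_of_isPiece {γ bf bg : ℝ} {i : I} {x yf yg : M i} (hfg : AgreeOnDom f g γ)
    (hf : IsPiece f γ bf ⟨i, (x, yf)⟩) (hg : IsPiece g γ bg ⟨i, (x, yg)⟩) (hne : yf ≠ yg) :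
    Dtp f g = (f.d - bf) + (g.d - bg) + dist yf yg := by
  have hdiv : divPt f g = γ := by
    refine le_antisymm (not_lt.1 fun hlt => hne ?_)
      (le_divPt (hf.lt.le.trans hf.le_d) (hg.lt.le.trans hg.le_d) hfg)
    obtain ⟨t, ht1, ht2⟩ := exists_between (lt_min hlt (lt_min hf.lt hg.lt))
    have := (agreeOnDom_divPt f g).eq_of_isPiece hf hg
      ⟨ht1, ht2.trans_le ((min_le_right _ _).trans (min_le_left _ _))⟩
      ⟨ht1, ht2.trans_le ((min_le_right _ _).trans (min_le_right _ _))⟩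
      (ht2.trans_le (min_le_left _ _))
    simpa using this
  have hAf : afterPt f γ = bf := afterPt_eq hf.lt (fun t ht => hf.isSome ht) hf.right
  have hAg : afterPt g γ = bg := afterPt_eq hg.lt (fun t ht => hg.isSome ht) hg.right
  rw [Dtp, hdiv, hAf, hAg, hf.eq _ hf.mid_mem, hg.eq _ hg.mid_mem,
    if_pos ⟨hf.lt, hg.lt, ⟨rfl, rfl⟩⟩]
  simp [optSndDist]

lemma Dtp_le (f g : TreeProdFun I M) : Dtp f g ≤ f.d + g.d - 2 * divPt f g := by
  rcases Dtp_cases f g with h | ⟨γ, af, ag, i, x, yf, yg, hγ, hsf, hsg, hf, hg, h⟩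
  · exact h.le
  rcases hγ.lt_or_eq with hlt | rfl
  · -- both pieces straddle the divergence point, so they carry the same value
    obtain ⟨t, ht1, ht2⟩ := exists_between hlt
    have hv := (agreeOnDom_divPt f g).eq_of_isPiece hf hg ⟨ht1, ht2.trans hsf⟩
      ⟨ht1, ht2.trans hsg⟩ ht2
    obtain rfl : yf = yg := by simpa using hv
    rw [h, dist_self]
    linarith
  · linarith [hf.dist_eq, hg.dist_eq, dist_triangle_left yf yg x]

lemma Dtp_le_of_agreeOnDom {r : ℝ} (h : AgreeOnDom f g r) (hf : r ≤ f.d) (hg : r ≤ g.d) :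
    Dtp f g ≤ f.d + g.d - 2 * r :=
  (Dtp_le f g).trans (by linarith [le_divPt hf hg h])

lemma Dtp_le_of_isPiece {γ bf bg : ℝ} {i : I} {x yf yg : M i} (hfg : AgreeOnDom f g γ)
    (hf : IsPiece f γ bf ⟨i, (x, yf)⟩) (hg : IsPiece g γ bg ⟨i, (x, yg)⟩) :
    Dtp f g ≤ (f.d - bf) + (g.d - bg) + dist yf yg := by
  by_cases hne : yf = yg
  · subst hne
    have hb : bf = bg := by linarith [hf.dist_eq, hg.dist_eq]
    subst hb
    have hag : AgreeOnDom f g bf := by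
      intro t ht hs
      rcases lt_trichotomy t γ with htγ | rfl | htγ
      · exact hfg t ⟨ht.1, htγ⟩ hs
      · simp [hf.left] at hs
      · rw [hf.eq t ⟨htγ, ht.2⟩, hg.eq t ⟨htγ, ht.2⟩]
    have := Dtp_le_of_agreeOnDom hag hf.le_d hg.le_d
    rw [dist_self]
    linarith
  · exact (Dtp_eq_of_isPiece hfg hf hg hne).le

lemma abs_d_sub_d_le_Dtp (f g : TreeProdFun I M) : |f.d - g.d| ≤ Dtp f g := by
  rcases Dtp_cases f g with h | ⟨γ, af, ag, i, x, yf, yg, -, -, -, hf, hg, h⟩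
  · rw [h, abs_le]
    constructor <;> linarith [divPt_le_left f g, divPt_le_right f g]
  · rw [h, abs_le]
    have h1 := dist_triangle x yg yf
    have h2 := dist_triangle x yf yg
    rw [dist_comm yg yf] at h1
    constructor <;> linarith [hf.dist_eq, hg.dist_eq, hf.le_d, hg.le_d]

lemma Dtp_nonneg (f g : TreeProdFun I M) : 0 ≤ Dtp f g :=
  (abs_nonneg _).trans (abs_d_sub_d_le_Dtp f g)

lemma exists_isPiece_of_Dtp_lt {e : ℝ} (h : Dtp f g < e) (hd : divPt f g + e ≤ f.d) :
    ∃ (γ af ag : ℝ) (i : I) (x yf yg : M i), γ ≤ divPt f g ∧ IsPiece f γ af ⟨i, (x, yf)⟩ ∧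
      IsPiece g γ ag ⟨i, (x, yg)⟩ ∧ f.d - af < e ∧ g.d - ag < e ∧ dist yf yg < e := by
  rcases Dtp_cases f g with hD | ⟨γ, af, ag, i, x, yf, yg, hγ, -, -, hf, hg, hD⟩
  · linarith [divPt_le_right f g]
  · refine ⟨γ, af, ag, i, x, yf, yg, hγ, hf, hg, ?_, ?_, ?_⟩ <;>
      linarith [hf.le_d, hg.le_d, dist_nonneg (x := yf) (y := yg)]

lemma exists_isPiece_of_not_eqOn {e s : ℝ} (hfg : Dtp f g < e) (hgf : Dtp g f < e)
    (hne : ¬ EqOn f.f g.f (Iio s)) (hf : s + e ≤ f.d) (hg : s + e ≤ g.d) :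
    ∃ γ A v, γ < s ∧ f.d - A < e ∧ IsPiece f γ A v := by
  have : divPt f g < s ∨ divPt g f < s := by
    by_contra! h
    exact hne (((agreeOnDom_divPt f g).mono h.1).eqOn ((agreeOnDom_divPt g f).mono h.2))
  rcases this with h | h
  · obtain ⟨γ, af, -, i, x, yf, -, hγ, hP, -, hfa, -⟩ :=
      exists_isPiece_of_Dtp_lt hfg (by linarith)
    exact ⟨γ, af, _, hγ.trans_lt h, hfa, hP⟩
  · obtain ⟨γ, -, ag, i, x, -, yg, hγ, -, hP, -, hga, -⟩ :=
      exists_isPiece_of_Dtp_lt hgf (by linarith)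
    exact ⟨γ, ag, _, hγ.trans_lt h, hga, hP⟩

lemma IsPiece.eq_of_Dtp_lt {e th γf af γg ag : ℝ} {i : I} {x yf : M i} {vg : PairVal I M}
    (h : Dtp f g < e) (hf : IsPiece f γf af ⟨i, (x, yf)⟩)
    (hg : IsPiece g γg ag vg) (htf : th ∈ Ioo γf af) (htg : th ∈ Ioo γg ag)
    (hfd : th + e ≤ f.d) (hgd : th + e ≤ g.d) :
    γf = γg ∧ AgreeOnDom f g γf ∧ ∃ yg, vg = ⟨i, (x, yg)⟩ ∧ dist yf yg < e := by
  rcases le_or_gt (divPt f g) th with hs | hs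
  · obtain ⟨γ, af', ag', j, x', yf', yg', hγ, hf', hg', hfa, hga, hdist⟩ :=
      exists_isPiece_of_Dtp_lt h (by linarith)
    have hγth : γ < th := (hγ.trans hs).lt_of_ne fun heq => by
      have := hf.isSome htf
      rw [← heq, hf'.left] at this
      simp at this
    obtain ⟨hγf, -, hv⟩ := hf.unique hf' htf ⟨hγth, by linarith⟩
    obtain ⟨hγg, -, hvg⟩ := hg.unique hg' htg ⟨hγth, by linarith⟩
    cases hv
    exact ⟨hγf.trans hγg.symm, (agreeOnDom_divPt f g).mono (hγf ▸ hγ), yg', hvg, hdist⟩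
  · have hag := (agreeOnDom_divPt f g).mono hs.le
    obtain rfl := (agreeOnDom_divPt f g).eq_of_isPiece hf hg htf htg hs
    refine ⟨hag.start_eq hf hg htf.1.le htg.1.le htf.2 htg.2, hag.mono htf.1.le, yf, rfl, ?_⟩
    rw [dist_self]
    exact (Dtp_nonneg f g).trans_lt h

end Distance

/-! ### Limits of Cauchy sequences -/

section Cauchy

variable {u : ℕ → TreeProdFun I M}

def IsDtpCauchy (u : ℕ → TreeProdFun I M) : Prop :=
  ∀ ε : ℝ, 0 < ε → ∃ N : ℕ, ∀ m ≥ N, ∀ n ≥ N, Dtp (u m) (u n) < ε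

/-- A notion of limit that needs no triangle inequality for `D`. -/
def IsDtpLimit (u : ℕ → TreeProdFun I M) (F : TreeProdFun I M) : Prop :=
  ∀ e > 0, ∀ h : TreeProdFun I M, (∀ᶠ m in atTop, Dtp h (u m) < e) → Dtp h F < 4 * e

def EventuallyAgree (u : ℕ → TreeProdFun I M) (r : ℝ) : Prop :=
  ∃ K, ∀ m ≥ K, ∀ l ≥ K, EqOn (u m).f (u l).f (Iio r)

lemma IsDtpCauchy.cauchySeq_d (hu : IsDtpCauchy u) : CauchySeq fun n => (u n).d := by
  refine Metric.cauchySeq_iff.2 fun ε hε => ?_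
  obtain ⟨N, hN⟩ := hu ε hε
  exact ⟨N, fun m hm n hn => (abs_d_sub_d_le_Dtp _ _).trans_lt (hN m hm n hn)⟩

lemma IsDtpLimit.tendsto {F : TreeProdFun I M} (hF : IsDtpLimit u F) (hu : IsDtpCauchy u) :
    Tendsto (fun n => Dtp (u n) F) atTop (𝓝 0) := by
  refine Metric.tendsto_atTop.2 fun ε hε => ?_
  obtain ⟨N, hN⟩ := hu (ε / 4) (by positivity)
  refine ⟨N, fun n hn => ?_⟩
  have := hF (ε / 4) (by positivity) (u n) (eventually_atTop.2 ⟨N, fun m hm => hN n hn m hm⟩)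
  rw [Real.dist_eq, sub_zero, abs_of_nonneg (Dtp_nonneg _ _)]
  linarith

end Cauchy

/-! ### Gluing common prefixes -/

structure ApproxBelow (F : ℝ → Option (PairVal I M)) (d : ℝ) : Prop where
  nonneg : 0 ≤ d
  eq_none : ∀ t, d ≤ t → F t = none
  approx : ∀ r < d, ∀ ε > 0,
    ∃ g : TreeProdFun I M, r < g.d ∧ g.d < d + ε ∧ EqOn F g.f (Iio r)

namespace ApproxBelow

variable {F : ℝ → Option (PairVal I M)} {d : ℝ}

lemma exists_eqOn (h : ApproxBelow F d) {t : ℝ} (ht : t < d) :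
    ∃ r, t < r ∧ ∃ g : TreeProdFun I M, r < g.d ∧ EqOn F g.f (Iio r) := by
  obtain ⟨g, hg, -, hgF⟩ := h.approx ((t + d) / 2) (by linarith) 1 one_pos
  exact ⟨(t + d) / 2, by linarith, g, hg, hgF⟩

lemma lt_of_isSome (h : ApproxBelow F d) {t : ℝ} (ht : (F t).isSome) : t < d :=
  not_le.1 fun hdt => by simp [h.eq_none t hdt] at ht

lemma dom_sub (h : ApproxBelow F d) (t : ℝ) (ht : (F t).isSome) : t ∈ Ioo 0 d := by
  have hr := h.lt_of_isSome ht
  obtain ⟨r, htr, g, -, hg⟩ := h.exists_eqOn hr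
  rw [hg htr] at ht
  exact ⟨(g.mem_Ioo_of_isSome ht).1, hr⟩

lemma dom_open (h : ApproxBelow F d) : IsOpen {t | (F t).isSome = true} := by
  refine isOpen_iff_mem_nhds.2 fun t ht => ?_
  obtain ⟨r, htr, g, -, hg⟩ := h.exists_eqOn (h.lt_of_isSome ht)
  have hgt : (g.f t).isSome := by rw [← hg htr]; exact ht
  refine mem_of_superset (inter_mem (Iio_mem_nhds htr) (g.dom_open.mem_nhds hgt)) fun s hs => ?_
  change (F s).isSome
  rw [hg hs.1]
  exact hs.2

lemma dom_dense (h : ApproxBelow F d) : Ioo 0 d ⊆ closure {t | (F t).isSome = true} := by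
  intro t ht
  obtain ⟨r, htr, g, hrg, hg⟩ := h.exists_eqOn ht.2
  have hcl := isOpen_Iio.inter_closure ⟨htr, g.dom_dense ⟨ht.1, htr.trans hrg⟩⟩
  refine closure_mono (fun s hs => ?_) hcl
  change (F s).isSome
  rw [hg hs.1]
  exact hs.2

lemma distinct (h : ApproxBelow F d) (t : ℝ) (i : I) (x y : M i)
    (ht : F t = some ⟨i, (x, y)⟩) : x ≠ y := by
  obtain ⟨r, htr, g, -, hg⟩ := h.exists_eqOn (h.lt_of_isSome (by rw [ht]; rfl))
  exact g.distinct t i x y ((hg htr).symm.trans ht)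

lemma locConst (h : ApproxBelow F d) (t : ℝ) (ht : (F t).isSome) :
    ∀ᶠ s in 𝓝 t, F s = F t := by
  obtain ⟨r, htr, g, -, hg⟩ := h.exists_eqOn (h.lt_of_isSome ht)
  have hgt : (g.f t).isSome := by rw [← hg htr]; exact ht
  filter_upwards [g.locConst t hgt, Iio_mem_nhds htr] with s hs hsr
  rw [hg hsr, hs, ← hg htr]

lemma intervalLen (h : ApproxBelow F d) (a b : ℝ) (hab : a < b)
    (hsome : ∀ t ∈ Ioo a b, (F t).isSome) (ha : ¬ (F a).isSome) (hb : ¬ (F b).isSome)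
    (t : ℝ) (ht : t ∈ Ioo a b) (i : I) (x y : M i) (hv : F t = some ⟨i, (x, y)⟩) :
    dist x y = b - a := by
  have hbd : b ≤ d := not_lt.1 fun hdb => by
    have := h.lt_of_isSome (hsome (max a d + (b - max a d) / 2)
      ⟨by linarith [le_max_left a d], by linarith [max_lt hab hdb]⟩)
    linarith [le_max_right a d, max_lt hab hdb]
  rcases hbd.lt_or_eq with hbd | rfl
  · obtain ⟨r, hbr, g, -, hg⟩ := h.exists_eqOn hbd
    have hgF : ∀ s, s ≤ b → g.f s = F s := fun s hs => (hg (hs.trans_lt hbr)).symm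
    refine g.intervalLen a b hab (fun s hs => ?_) ?_ ?_ t ht i x y ?_
    · rw [hgF s hs.2.le]; exact hsome s hs
    · rwa [hgF a hab.le]
    · rwa [hgF b le_rfl]
    · rwa [hgF t ht.2.le]
  -- the last piece: its length is squeezed between `r - a` and `g.d - a`
  have key : ∀ r, t < r → r < b → ∀ g : TreeProdFun I M, EqOn F g.f (Iio r) →
      r ≤ dist x y + a ∧ dist x y + a ≤ g.d := by
    intro r htr hrb g hg
    have hga : g.f a = none := by
      rw [← hg (ht.1.trans htr)]; exact Option.not_isSome_iff_eq_none.1 ha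
    obtain ⟨b', hrb', hP⟩ := exists_isPiece_of_Ioo ((hg htr).symm.trans hv) hga ht.1 htr
      fun s hs => by rw [← hg hs.2]; exact hsome s ⟨hs.1, hs.2.trans hrb⟩
    exact ⟨by linarith [hP.dist_eq], by linarith [hP.dist_eq, hP.le_d]⟩
  refine le_antisymm (le_of_forall_pos_lt_add fun ε hε => ?_)
    (le_of_forall_pos_lt_add fun ε hε => ?_)
  · obtain ⟨g, -, hgd, hg⟩ := h.approx ((t + b) / 2) (by linarith [ht.2]) ε hε
    linarith [(key _ (by linarith [ht.2]) (by linarith [ht.2]) g hg).2]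
  · set r := max ((t + b) / 2) (b - ε / 2)
    have hr : t < r ∧ r < b := ⟨by linarith [ht.2, le_max_left ((t + b) / 2) (b - ε / 2)],
      max_lt (by linarith [ht.2]) (by linarith)⟩
    obtain ⟨g, -, -, hg⟩ := h.approx r hr.2 1 one_pos
    linarith [(key r hr.1 hr.2 g hg).1, le_max_right ((t + b) / 2) (b - ε / 2)]

lemma noFakeExit (h : ApproxBelow F d) (a b c : ℝ) (hab : a < b) (_hbc : b < c)
    (h₁ : ∀ t ∈ Ioo a b, (F t).isSome) (h₂ : ∀ t ∈ Ioo b c, (F t).isSome)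
    (ha : ¬ (F a).isSome) (hb : ¬ (F b).isSome) (_hc : ¬ (F c).isSome)
    (s : ℝ) (hs : s ∈ Ioo a b) (t : ℝ) (ht : t ∈ Ioo b c) (i : I) (x y z w : M i)
    (hvs : F s = some ⟨i, (x, y)⟩) (hvt : F t = some ⟨i, (z, w)⟩) : y ≠ z := by
  obtain ⟨r, htr, g, -, hg⟩ := h.exists_eqOn (h.lt_of_isSome (h₂ t ht))
  have hgb : g.f b = none := by
    rw [← hg (ht.1.trans htr)]; exact Option.not_isSome_iff_eq_none.1 hb
  obtain ⟨c', hc', hP⟩ := exists_isPiece_of_Ioo ((hg htr).symm.trans hvt) hgb ht.1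
    (lt_min ht.2 htr) fun u hu => by
      rw [← hg (hu.2.trans_le (min_le_right _ _))]
      exact h₂ u ⟨hu.1, hu.2.trans_le (min_le_left _ _)⟩
  have hlt : ∀ u, u ≤ b → u < r := fun u hu => hu.trans_lt (ht.1.trans htr)
  refine g.noFakeExit a b c' hab hP.lt (fun u hu => ?_) (fun u hu => hP.isSome hu) ?_ ?_ ?_
    s hs t ⟨ht.1, ?_⟩ i x y z w ?_ ?_
  · rw [← hg (hlt u hu.2.le)]; exact h₁ u hu
  · rwa [← hg (hlt a hab.le)]
  · rwa [← hg (hlt b le_rfl)]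
  · simp [hP.right]
  · exact (lt_min ht.2 htr).trans_le hc'
  · rw [← hg (hlt s hs.2.le)]; exact hvs
  · rw [← hg htr]; exact hvt

lemma noBacktrack (h : ApproxBelow F d) (p q : ℝ) (hq : 0 < q)
    (hsub : Ioo (p - q) (p + q) ⊆ Ioo 0 d)
    (hsym : ∀ t ∈ Ioo (p - q) (p + q),
      F t = Option.map (fun v : PairVal I M => ⟨v.1, (v.2.2, v.2.1)⟩) (F (2 * p - t))) :
    False := by
  have hp := hsub (show p ∈ Ioo (p - q) (p + q) from ⟨by linarith, by linarith⟩)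
  have hpq : 0 ≤ p - q := not_lt.1 fun hneg => by
    linarith [(hsub ⟨by linarith, by linarith [hp.1]⟩ : (p - q) / 2 ∈ Ioo 0 d).1]
  obtain ⟨r, hpr, g, hrg, hg⟩ := h.exists_eqOn hp.2
  have hq' : 0 < min q (r - p) := lt_min hq (by linarith)
  have hq'q := min_le_left q (r - p)
  have hq'r := min_le_right q (r - p)
  refine g.noBacktrack p (min q (r - p)) hq'
    (fun u hu => ⟨by linarith [hu.1], by linarith [hu.2]⟩) fun u hu => ?_
  rw [← hg (show u < r by linarith [hu.2]), ← hg (show 2 * p - u < r by linarith [hu.1])]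
  exact hsym u ⟨by linarith [hu.1], by linarith [hu.2]⟩

def toTreeProdFun (h : ApproxBelow F d) : TreeProdFun I M where
  d := d
  d_nonneg := h.nonneg
  f := F
  dom_sub := h.dom_sub
  dom_open := h.dom_open
  dom_dense := h.dom_dense
  distinct := h.distinct
  locConst := h.locConst
  intervalLen := h.intervalLen
  noFakeExit := h.noFakeExit
  noBacktrack := h.noBacktrack

end ApproxBelow

section CommonPrefix

variable {u : ℕ → TreeProdFun I M}

lemma isDtpLimit_of_eqOn {F : TreeProdFun I M}
    (hd : Tendsto (fun n => (u n).d) atTop (𝓝 F.d))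
    (hF : ∀ r < F.d, ∀ᶠ m in atTop, EqOn F.f (u m).f (Iio r)) : IsDtpLimit u F := by
  intro e he h hh
  obtain ⟨m, hhm, hdm, hFm⟩ := (hh.and ((hd.eventually (Metric.ball_mem_nhds _ he)).and
    (hF (F.d - e) (by linarith)))).exists
  have hdm' := abs_lt.1 (Real.dist_eq _ _ ▸ hdm : |(u m).d - F.d| < e)
  have hdh := abs_le.1 (abs_d_sub_d_le_Dtp h (u m))
  have hhF : ∀ s ≤ divPt h (u m), s ≤ F.d - e → AgreeOnDom h F s := fun s hsD hsr =>
    ((agreeOnDom_divPt h (u m)).mono hsD).trans_eqOn (hFm.symm.mono (Iio_subset_Iio hsr))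
  rcases Dtp_cases h (u m) with hD | ⟨γ, Ah, Am, i, x, yh, ym, hγ, -, -, hPh, hPm, hD⟩
  · have := Dtp_le_of_agreeOnDom (hhF _ (min_le_left _ (F.d - e)) (min_le_right _ _))
      ((min_le_left _ _).trans (divPt_le_left _ _)) ((min_le_right _ _).trans (by linarith))
    rcases min_cases (divPt h (u m)) (F.d - e) with ⟨hmin, -⟩ | ⟨hmin, -⟩ <;>
      rw [hmin] at this <;> linarith
  rcases le_or_gt (F.d - e) γ with hγr | hγr
  · have := Dtp_le_of_agreeOnDom (hhF _ (hγr.trans hγ) le_rfl)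
      (hγr.trans (hγ.trans (divPt_le_left _ _))) (by linarith)
    linarith
  · have hPF : IsPiece F γ Am ⟨i, (x, ym)⟩ := hFm.agreeOnDom.isPiece hPm hγr (by linarith)
    have := Dtp_le_of_isPiece (hhF γ hγ hγr.le) hPh hPF
    linarith

lemma exists_isDtpLimit_of_eventuallyAgree {dI : ℝ}
    (hd : Tendsto (fun n => (u n).d) atTop (𝓝 dI)) (hA : ∀ r < dI, EventuallyAgree u r) :
    ∃ F, IsDtpLimit u F := by
  choose κ hκ using hA
  -- `F t` is the value that the `u m` eventually share at `t`
  set F : ℝ → Option (PairVal I M) := fun t =>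
    if ht : t < dI then (u (κ ((t + dI) / 2) (by linarith))).f t else none
  have hFu : ∀ r (hr : r < dI), ∀ m ≥ κ r hr, EqOn F (u m).f (Iio r) := by
    intro r hr m hm t ht
    have htd : t < dI := ht.trans hr
    have hs : (t + dI) / 2 < dI := by linarith
    simp only [F, dif_pos htd]
    rw [hκ _ hs _ le_rfl (max (κ r hr) (κ _ hs)) (le_max_right _ _)
      (show t < (t + dI) / 2 by linarith)]
    exact hκ r hr _ (le_max_left _ _) m hm ht
  have hF : ApproxBelow F dI := by
    refine ⟨ge_of_tendsto' hd fun n => (u n).d_nonneg, fun t ht => dif_neg (not_lt.2 ht),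
      fun r hr ε hε => ?_⟩
    obtain ⟨m, hm, hmd⟩ := ((eventually_ge_atTop (κ r hr)).and
      (hd.eventually (Ioo_mem_nhds hr (by linarith : dI < dI + ε)))).exists
    exact ⟨u m, hmd.1, hmd.2, hFu r hr m hm⟩
  exact ⟨hF.toTreeProdFun, isDtpLimit_of_eqOn hd fun r hr =>
    eventually_atTop.2 ⟨κ r hr, hFu r hr⟩⟩

end CommonPrefix

/-! ### A new final piece -/

noncomputable def tailFun (g : TreeProdFun I M) (γ : ℝ) (i : I) (x z : M i) :
    ℝ → Option (PairVal I M) :=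
  fun t => if t ≤ γ then g.f t else if t < γ + dist x z then some ⟨i, (x, z)⟩ else none

section TailFun

variable {g : TreeProdFun I M} {γ b : ℝ} {i : I} {x y z : M i}

lemma tailFun_of_le {t : ℝ} (ht : t ≤ γ) : tailFun g γ i x z t = g.f t := if_pos ht

lemma tailFun_of_mem {t : ℝ} (ht : t ∈ Ioo γ (γ + dist x z)) :
    tailFun g γ i x z t = some ⟨i, (x, z)⟩ := by
  simp [tailFun, not_le.2 ht.1, ht.2]

lemma tailFun_of_ge {t : ℝ} (hγt : γ < t) (ht : γ + dist x z ≤ t) :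
    tailFun g γ i x z t = none := by
  simp [tailFun, not_le.2 hγt, not_lt.2 ht]

lemma tailFun_mem_Ioo (hP : IsPiece g γ b ⟨i, (x, y)⟩) (hxz : x ≠ z) (t : ℝ)
    (ht : (tailFun g γ i x z t).isSome) : t ∈ Ioo 0 (γ + dist x z) := by
  have hL := dist_pos.2 hxz
  rcases le_or_gt t γ with htγ | htγ
  · rw [tailFun_of_le htγ] at ht
    exact ⟨(g.mem_Ioo_of_isSome ht).1, by linarith⟩
  · refine ⟨hP.nonneg.trans_lt htγ, not_le.1 fun h => ?_⟩
    simp [tailFun_of_ge htγ h] at ht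

lemma tailFun_interval (hP : IsPiece g γ b ⟨i, (x, y)⟩) (hxz : x ≠ z) {a c : ℝ} (hac : a < c)
    (hsome : ∀ t ∈ Ioo a c, (tailFun g γ i x z t).isSome) (ha : ¬ (tailFun g γ i x z a).isSome)
    (hc : ¬ (tailFun g γ i x z c).isSome) (hγc : γ < c) : a = γ ∧ c = γ + dist x z := by
  have hL := dist_pos.2 hxz
  have hγ : ¬ (tailFun g γ i x z γ).isSome := by simp [tailFun_of_le le_rfl, hP.left]
  have haγ : γ ≤ a := not_lt.1 fun h => hγ (hsome γ ⟨h, hγc⟩)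
  have hcL : c ≤ γ + dist x z := not_lt.1 fun h => by
    set m := max a (γ + dist x z)
    have := tailFun_mem_Ioo hP hxz _ (hsome (m + (c - m) / 2)
      ⟨by linarith [le_max_left a (γ + dist x z)], by linarith [max_lt hac h]⟩)
    linarith [this.2, le_max_right a (γ + dist x z), max_lt hac h]
  refine ⟨le_antisymm (not_lt.1 fun h => ha ?_) haγ, le_antisymm hcL (not_lt.1 fun h => hc ?_)⟩
  · rw [tailFun_of_mem ⟨h, hac.trans_le hcL⟩]; rfl
  · rw [tailFun_of_mem ⟨hγc, h⟩]; rfl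

lemma tailFun_dom_open (hP : IsPiece g γ b ⟨i, (x, y)⟩) :
    IsOpen {t | (tailFun g γ i x z t).isSome = true} := by
  refine isOpen_iff_mem_nhds.2 fun t ht => ?_
  rcases lt_trichotomy t γ with htγ | rfl | htγ
  · have hgt : (g.f t).isSome := by rw [← tailFun_of_le htγ.le]; exact ht
    refine mem_of_superset (inter_mem (Iio_mem_nhds htγ) (g.dom_open.mem_nhds hgt))
      fun s hs => ?_
    change (tailFun g γ i x z s).isSome
    rw [tailFun_of_le (le_of_lt hs.1)]
    exact hs.2
  · simp [tailFun_of_le (le_refl t), hP.left] at ht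
  · have htL : t < γ + dist x z := not_le.1 fun h => by simp [tailFun_of_ge htγ h] at ht
    refine mem_of_superset (Ioo_mem_nhds htγ htL) fun s hs => ?_
    change (tailFun g γ i x z s).isSome
    rw [tailFun_of_mem hs]; rfl

lemma tailFun_dom_dense (hP : IsPiece g γ b ⟨i, (x, y)⟩) (hxz : x ≠ z) :
    Ioo 0 (γ + dist x z) ⊆ closure {t | (tailFun g γ i x z t).isSome = true} := by
  intro t ht
  rcases lt_or_ge t γ with htγ | htγ
  · have hcl := isOpen_Iio.inter_closure
      ⟨htγ, g.dom_dense ⟨ht.1, htγ.trans (hP.lt.trans_le hP.le_d)⟩⟩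
    refine closure_mono (fun s hs => ?_) hcl
    change (tailFun g γ i x z s).isSome
    rw [tailFun_of_le (le_of_lt hs.1)]
    exact hs.2
  · have hcl : t ∈ closure (Ioo γ (γ + dist x z)) := by
      rw [closure_Ioo (by linarith [dist_pos.2 hxz])]
      exact ⟨htγ, ht.2.le⟩
    refine closure_mono (fun s hs => ?_) hcl
    change (tailFun g γ i x z s).isSome
    rw [tailFun_of_mem hs]; rfl

lemma tailFun_distinct (hxz : x ≠ z) (t : ℝ) (j : I) (x' y' : M j)
    (ht : tailFun g γ i x z t = some ⟨j, (x', y')⟩) : x' ≠ y' := by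
  unfold tailFun at ht
  split_ifs at ht with h₁ h₂
  · exact g.distinct t j x' y' ht
  · cases ht; exact hxz

lemma tailFun_locConst (hP : IsPiece g γ b ⟨i, (x, y)⟩) (t : ℝ)
    (ht : (tailFun g γ i x z t).isSome) :
    ∀ᶠ s in 𝓝 t, tailFun g γ i x z s = tailFun g γ i x z t := by
  rcases lt_trichotomy t γ with htγ | rfl | htγ
  · rw [tailFun_of_le htγ.le] at ht ⊢
    filter_upwards [g.locConst t ht, Iio_mem_nhds htγ] with s hs hsγ
    rw [tailFun_of_le (le_of_lt hsγ), hs]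
  · simp [tailFun_of_le (le_refl t), hP.left] at ht
  · have htL : t < γ + dist x z := not_le.1 fun h => by simp [tailFun_of_ge htγ h] at ht
    filter_upwards [Ioo_mem_nhds htγ htL] with s hs
    rw [tailFun_of_mem hs, tailFun_of_mem ⟨htγ, htL⟩]

lemma tailFun_intervalLen (hP : IsPiece g γ b ⟨i, (x, y)⟩) (hxz : x ≠ z) (a c : ℝ)
    (hac : a < c) (hsome : ∀ t ∈ Ioo a c, (tailFun g γ i x z t).isSome)
    (ha : ¬ (tailFun g γ i x z a).isSome) (hc : ¬ (tailFun g γ i x z c).isSome)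
    (t : ℝ) (ht : t ∈ Ioo a c) (j : I) (x' y' : M j)
    (hv : tailFun g γ i x z t = some ⟨j, (x', y')⟩) : dist x' y' = c - a := by
  rcases le_or_gt c γ with hcγ | hγc
  · have hgF : ∀ s, s ≤ c → g.f s = tailFun g γ i x z s :=
      fun s hs => (tailFun_of_le (hs.trans hcγ)).symm
    refine g.intervalLen a c hac (fun s hs => ?_) ?_ ?_ t ht j x' y' ?_
    · rw [hgF s hs.2.le]; exact hsome s hs
    · rwa [hgF a hac.le]
    · rwa [hgF c le_rfl]
    · rwa [hgF t ht.2.le]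
  · obtain ⟨rfl, rfl⟩ := tailFun_interval hP hxz hac hsome ha hc hγc
    rw [tailFun_of_mem ht] at hv
    cases hv
    ring

lemma tailFun_noFakeExit (hP : IsPiece g γ b ⟨i, (x, y)⟩) (hxz : x ≠ z) (a c e : ℝ)
    (hac : a < c) (hce : c < e) (h₁ : ∀ t ∈ Ioo a c, (tailFun g γ i x z t).isSome)
    (h₂ : ∀ t ∈ Ioo c e, (tailFun g γ i x z t).isSome) (ha : ¬ (tailFun g γ i x z a).isSome)
    (hc : ¬ (tailFun g γ i x z c).isSome) (he : ¬ (tailFun g γ i x z e).isSome)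
    (s : ℝ) (hs : s ∈ Ioo a c) (t : ℝ) (ht : t ∈ Ioo c e) (j : I) (x₁ y₁ z₁ w₁ : M j)
    (hvs : tailFun g γ i x z s = some ⟨j, (x₁, y₁)⟩)
    (hvt : tailFun g γ i x z t = some ⟨j, (z₁, w₁)⟩) : y₁ ≠ z₁ := by
  have hgF : ∀ u, u ≤ γ → g.f u = tailFun g γ i x z u := fun u hu => (tailFun_of_le hu).symm
  rcases le_or_gt e γ with heγ | hγe
  · have hle : ∀ u, u ≤ e → g.f u = tailFun g γ i x z u :=
      fun u hu => (tailFun_of_le (hu.trans heγ)).symm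
    refine g.noFakeExit a c e hac hce (fun u hu => ?_) (fun u hu => ?_) ?_ ?_ ?_ s hs t ht j
      x₁ y₁ z₁ w₁ ?_ ?_
    · rw [hle u (hu.2.trans hce).le]; exact h₁ u hu
    · rw [hle u hu.2.le]; exact h₂ u hu
    · rwa [hle a (hac.trans hce).le]
    · rwa [hle c hce.le]
    · rwa [hle e le_rfl]
    · rwa [hle s (hs.2.trans hce).le]
    · rwa [hle t ht.2.le]
  · -- the second interval is the new piece; it enters through `x`, like `g`'s piece after `γ`
    obtain ⟨rfl, rfl⟩ := tailFun_interval hP hxz hce h₂ hc he hγe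
    rw [tailFun_of_mem ht] at hvt
    cases hvt
    refine g.noFakeExit a c b hac hP.lt (fun u hu => ?_) (fun u hu => hP.isSome hu) ?_
      (by simp [hP.left]) (by simp [hP.right]) s hs _ hP.mid_mem i x₁ y₁ x y ?_
      (hP.eq _ hP.mid_mem)
    · rw [hgF u hu.2.le]; exact h₁ u hu
    · rwa [hgF a hac.le]
    · rwa [hgF s hs.2.le]

lemma tailFun_noBacktrack (hP : IsPiece g γ b ⟨i, (x, y)⟩) (hxz : x ≠ z) (p q : ℝ)
    (hq : 0 < q) (hsub : Ioo (p - q) (p + q) ⊆ Ioo 0 (γ + dist x z))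
    (hsym : ∀ t ∈ Ioo (p - q) (p + q), tailFun g γ i x z t =
      Option.map (fun v : PairVal I M => ⟨v.1, (v.2.2, v.2.1)⟩) (tailFun g γ i x z (2 * p - t))) :
    False := by
  have hL := dist_pos.2 hxz
  have hp := hsub (show p ∈ Ioo (p - q) (p + q) from ⟨by linarith, by linarith⟩)
  rcases lt_trichotomy p γ with hpγ | hpγ | hpγ
  · have hpq : 0 ≤ p - q := not_lt.1 fun hneg => by
      linarith [(hsub ⟨by linarith, by linarith [hp.1]⟩ : (p - q) / 2 ∈ Ioo 0 _).1]
    have hq' : 0 < min q (γ - p) := lt_min hq (by linarith)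
    have hq'q := min_le_left q (γ - p)
    have hq'γ := min_le_right q (γ - p)
    refine g.noBacktrack p (min q (γ - p)) hq'
      (fun u hu => ⟨by linarith [hu.1], by linarith [hu.2, hP.lt, hP.le_d]⟩) fun u hu => ?_
    rw [← tailFun_of_le (show u ≤ γ by linarith [hu.2]),
      ← tailFun_of_le (show 2 * p - u ≤ γ by linarith [hu.1])]
    exact hsym u ⟨by linarith [hu.1], by linarith [hu.2]⟩
  · -- reflected at `γ`, the new piece would make `g` exit through `x` just before `γ`
    subst hpγ
    refine hP.not_forall_eq_before (c := p - min q (dist x z)) (z := z) (by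
      linarith [lt_min hq hL]) fun u hu => ?_
    have := hsym u ⟨by linarith [hu.1, min_le_left q (dist x z)], by linarith [hu.2]⟩
    rwa [tailFun_of_le hu.2.le, tailFun_of_mem ⟨by linarith [hu.2],
      by linarith [hu.1, min_le_right q (dist x z)]⟩] at this
  · have := hsym p ⟨by linarith, by linarith⟩
    rw [show 2 * p - p = p by ring, tailFun_of_mem ⟨hpγ, hp.2⟩] at this
    simp only [Option.map_some, Option.some.injEq, Sigma.mk.injEq, heq_eq_eq, Prod.mk.injEq,
      true_and] at this
    exact hxz this.1

end TailFun

lemma exists_replaceTail {g : TreeProdFun I M} {γ b : ℝ} {i : I} {x y z : M i}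
    (hP : IsPiece g γ b ⟨i, (x, y)⟩) (hxz : x ≠ z) :
    ∃ F : TreeProdFun I M, F.d = γ + dist x z ∧ EqOn F.f g.f (Iic γ) ∧
      IsPiece F γ F.d ⟨i, (x, z)⟩ := by
  have hL := dist_pos.2 hxz
  refine ⟨{ d := γ + dist x z
            d_nonneg := by linarith [hP.nonneg]
            f := tailFun g γ i x z
            dom_sub := tailFun_mem_Ioo hP hxz
            dom_open := tailFun_dom_open hP
            dom_dense := tailFun_dom_dense hP hxz
            distinct := tailFun_distinct hxz
            locConst := tailFun_locConst hP
            intervalLen := tailFun_intervalLen hP hxz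
            noFakeExit := tailFun_noFakeExit hP hxz
            noBacktrack := tailFun_noBacktrack hP hxz }, rfl, fun t ht => tailFun_of_le ht,
    ⟨by linarith, by simp [tailFun_of_le, hP.left], tailFun_of_ge (by linarith) le_rfl,
      fun t ht => tailFun_of_mem ht⟩⟩

section NewPiece

variable {u : ℕ → TreeProdFun I M}

lemma isDtpLimit_of_isPiece {F : TreeProdFun I M} {γ : ℝ} {i : I} {x z : M i} {y : ℕ → M i}
    {b : ℕ → ℝ} (hd : Tendsto (fun n => (u n).d) atTop (𝓝 F.d))
    (hF : IsPiece F γ F.d ⟨i, (x, z)⟩)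
    (hpiece : ∀ᶠ m in atTop, IsPiece (u m) γ (b m) ⟨i, (x, y m)⟩ ∧ EqOn F.f (u m).f (Iic γ))
    (hy : Tendsto y atTop (𝓝 z)) (hb : Tendsto b atTop (𝓝 F.d)) : IsDtpLimit u F := by
  intro e he h hh
  obtain ⟨m, hhm, hdm, hym, hbm, hPm, hFm⟩ :=
    (hh.and ((hd.eventually (Metric.ball_mem_nhds _ he)).and
      ((hy.eventually (Metric.ball_mem_nhds _ he)).and
        ((hb.eventually (Metric.ball_mem_nhds _ he)).and hpiece)))).exists
  have hdm' := abs_lt.1 (Real.dist_eq _ _ ▸ hdm : |(u m).d - F.d| < e)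
  have hbm' := abs_lt.1 (Real.dist_eq _ _ ▸ hbm : |b m - F.d| < e)
  have hym' : dist (y m) z < e := hym
  have hdh := abs_le.1 (abs_d_sub_d_le_Dtp h (u m))
  have hhF : ∀ s ≤ divPt h (u m), s ≤ γ → AgreeOnDom h F s := fun s hsD hsγ =>
    ((agreeOnDom_divPt h (u m)).mono hsD).trans_eqOn (hFm.symm.mono (Iio_subset_Iic_self.trans
      (Iic_subset_Iic.2 hsγ)))
  -- once `h` has a piece with the same start and entrance as the final piece of `F`, only its
  -- exit and its tail count
  have key : ∀ A y', γ ≤ divPt h (u m) → IsPiece h γ A ⟨i, (x, y')⟩ →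
      Dtp h F ≤ (h.d - A) + dist y' z := fun A y' hγ hA => by
    linarith [Dtp_le_of_isPiece (hhF γ hγ le_rfl) hA hF]
  rcases lt_or_ge γ (divPt h (u m)) with hγD | hDγ
  · have := key _ _ hγD.le ((agreeOnDom_divPt h (u m)).isPiece hPm hγD (divPt_le_left _ _))
    linarith [hPm.le_d]
  rcases Dtp_cases h (u m) with hD | ⟨γ₂, Ah, Am, j, x₂, yh, ym, hγ₂, -, -, hPh, hPm₂, hD⟩
  · have := Dtp_le_of_agreeOnDom (hhF _ le_rfl hDγ) (divPt_le_left _ _)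
      (hDγ.trans (hF.lt.le.trans hF.le_d))
    linarith
  rcases le_or_gt Am γ with hAγ | hγA
  · have := Dtp_le_of_isPiece (hhF γ₂ hγ₂ (hγ₂.trans hDγ)) hPh (hPm₂.of_eqOn_Iic hFm hAγ)
    linarith
  · -- the type-1 piece of `u m` reaches beyond `γ`, so it is the piece `]γ, b m[`
    obtain ⟨t, ht1, ht2⟩ := exists_between (lt_min hγA hPm.lt)
    obtain ⟨rfl, rfl, hv⟩ := hPm₂.unique hPm
      ⟨(hγ₂.trans hDγ).trans_lt ht1, ht2.trans_le (min_le_left _ _)⟩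
      ⟨ht1, ht2.trans_le (min_le_right _ _)⟩
    cases hv
    have := key Ah yh hγ₂ hPh
    linarith [dist_triangle yh (y m) z, hPm.le_d]

lemma exists_isDtpLimit_of_isPiece {dI γ : ℝ} {i : I} {x z : M i} {y : ℕ → M i} {b : ℕ → ℝ}
    (hd : Tendsto (fun n => (u n).d) atTop (𝓝 dI)) (hγ : γ < dI)
    (hpiece : ∀ᶠ m in atTop, IsPiece (u m) γ (b m) ⟨i, (x, y m)⟩)
    (hagree : EventuallyAgree u γ) (hy : Tendsto y atTop (𝓝 z))
    (hb : Tendsto b atTop (𝓝 dI)) : ∃ F, IsDtpLimit u F := by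
  obtain ⟨K₁, hK₁⟩ := eventually_atTop.1 hpiece
  obtain ⟨K₂, hK₂⟩ := hagree
  set K := max K₁ K₂
  have hdist : dist x z = dI - γ := by
    refine tendsto_nhds_unique (tendsto_const_nhds.dist hy) ((hb.sub_const γ).congr' ?_)
    filter_upwards [hpiece] with m hm using hm.dist_eq.symm
  have hxz : x ≠ z := fun h => by rw [h, dist_self] at hdist; linarith
  obtain ⟨F, hFd, hFK, hF⟩ := exists_replaceTail (hK₁ K (le_max_left _ _)) hxz
  rw [hdist, add_sub_cancel] at hFd
  refine ⟨F, isDtpLimit_of_isPiece (hFd ▸ hd) hF ?_ hy (hFd ▸ hb)⟩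
  filter_upwards [eventually_ge_atTop K] with m hm
  refine ⟨hK₁ m ((le_max_left _ _).trans hm), fun t ht => (hFK ht).trans ?_⟩
  rcases (show t ≤ γ from ht).lt_or_eq with hlt | rfl
  · exact hK₂ K (le_max_right _ _) m ((le_max_right _ _).trans hm) hlt
  · exact (hK₁ K (le_max_left _ _)).left.trans (hK₁ m ((le_max_left _ _).trans hm)).left.symm

lemma exists_not_eqOn_of_not_eventuallyAgree {r : ℝ} (h : ¬ EventuallyAgree u r) (m : ℕ) :
    ∃ c ≥ m, ¬ EqOn (u m).f (u c).f (Iio r) := by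
  by_contra! hc
  exact h ⟨m, fun a ha b hb => (hc a ha).symm.trans (hc b hb)⟩

lemma eventually_exists_isPiece (hu : IsDtpCauchy u) {dI ts th : ℝ}
    (hd : Tendsto (fun n => (u n).d) atTop (𝓝 dI)) (hth : th < dI) (hts : ts ≤ th)
    (hnot : ¬ EventuallyAgree u ts) {ε : ℝ} (hε : 0 < ε) :
    ∀ᶠ m in atTop, ∃ γ A v, γ < ts ∧ th < A ∧ (u m).d - A < ε ∧ IsPiece (u m) γ A v := by
  set e := min ε ((dI - th) / 2)
  have he : 0 < e := lt_min hε (by linarith)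
  have hedI : th + e < dI := by linarith [min_le_right ε ((dI - th) / 2)]
  obtain ⟨N, hN⟩ := hu e he
  obtain ⟨K, hK⟩ := eventually_atTop.1 (hd.eventually (lt_mem_nhds hedI))
  filter_upwards [eventually_ge_atTop (max N K)] with m hm
  have hmN : N ≤ m := (le_max_left _ _).trans hm
  have hmK : K ≤ m := (le_max_right _ _).trans hm
  obtain ⟨c, hcm, hc⟩ := exists_not_eqOn_of_not_eventuallyAgree hnot m
  obtain ⟨γ, A, v, hγ, hA, hP⟩ := exists_isPiece_of_not_eqOn (hN m hmN c (hmN.trans hcm))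
    (hN c (hmN.trans hcm) m hmN) hc (by linarith [hK m hmK])
    (by linarith [hK c (hmK.trans hcm)])
  exact ⟨γ, A, v, hγ, by linarith [hK m hmK], hA.trans_le (min_le_left _ _), hP⟩

lemma exists_common_isPiece (hu : IsDtpCauchy u) {th e₀ : ℝ} (he₀ : 0 < e₀)
    (hroom : ∀ᶠ m in atTop, th + e₀ < (u m).d)
    (hex : ∀ᶠ m in atTop, ∃ γ A v, th ∈ Ioo γ A ∧ IsPiece (u m) γ A v) :
    ∃ (γ : ℝ) (i : I) (x : M i) (y : ℕ → M i) (b : ℕ → ℝ),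
      ∀ᶠ m in atTop, th ∈ Ioo γ (b m) ∧ IsPiece (u m) γ (b m) ⟨i, (x, y m)⟩ := by
  obtain ⟨K, hK⟩ := eventually_atTop.1 (hex.and hroom)
  obtain ⟨N, hN⟩ := hu e₀ he₀
  set L := max K N
  have hLK : ∀ m ≥ L, K ≤ m := fun m hm => (le_max_left _ _).trans hm
  have hLN : ∀ m ≥ L, N ≤ m := fun m hm => (le_max_right _ _).trans hm
  obtain ⟨γ, b₀, ⟨i, x, y₀⟩, hth₀, hP₀⟩ := (hK L (hLK L le_rfl)).1
  have hpiece : ∀ m, ∃ b y', L ≤ m → th ∈ Ioo γ b ∧ IsPiece (u m) γ b ⟨i, (x, y')⟩ := by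
    intro m
    by_cases hm : L ≤ m
    · obtain ⟨γ', b, v, hth, hP⟩ := (hK m (hLK m hm)).1
      obtain ⟨hγ, -, y', rfl, -⟩ := hP₀.eq_of_Dtp_lt (hN L (hLN L le_rfl) m (hLN m hm)) hP hth₀
        hth (by linarith [(hK L (hLK L le_rfl)).2]) (by linarith [(hK m (hLK m hm)).2])
      exact ⟨b, y', fun _ => ⟨hγ ▸ hth, hγ ▸ hP⟩⟩
    · exact ⟨b₀, y₀, fun h => absurd h hm⟩
  choose b y hP using hpiece
  exact ⟨γ, i, x, y, b, eventually_atTop.2 ⟨L, hP⟩⟩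

lemma eventuallyAgree_and_cauchySeq (hu : IsDtpCauchy u) {th e₀ γ : ℝ} {i : I} {x : M i}
    {y : ℕ → M i} {b : ℕ → ℝ} (he₀ : 0 < e₀) (hroom : ∀ᶠ m in atTop, th + e₀ < (u m).d)
    (hP : ∀ᶠ m in atTop, th ∈ Ioo γ (b m) ∧ IsPiece (u m) γ (b m) ⟨i, (x, y m)⟩) :
    EventuallyAgree u γ ∧ CauchySeq y := by
  obtain ⟨K, hK⟩ := eventually_atTop.1 (hP.and hroom)
  have hclose : ∀ m ≥ K, ∀ l ≥ K, ∀ e ≤ e₀, Dtp (u m) (u l) < e →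
      AgreeOnDom (u m) (u l) γ ∧ dist (y m) (y l) < e := fun m hm l hl e he h => by
    obtain ⟨-, hag, y', hy', hdist⟩ := (hK m hm).1.2.eq_of_Dtp_lt h (hK l hl).1.2 (hK m hm).1.1
      (hK l hl).1.1 (by linarith [(hK m hm).2]) (by linarith [(hK l hl).2])
    obtain rfl : y l = y' := by simpa using hy'
    exact ⟨hag, hdist⟩
  obtain ⟨N, hN⟩ := hu e₀ he₀
  refine ⟨⟨max K N, fun m hm l hl => ?_⟩, Metric.cauchySeq_iff'.2 fun ε hε => ?_⟩
  · have hmK := (le_max_left K N).trans hm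
    have hlK := (le_max_left K N).trans hl
    have hmN := (le_max_right K N).trans hm
    have hlN := (le_max_right K N).trans hl
    exact (hclose m hmK l hlK e₀ le_rfl (hN m hmN l hlN)).1.eqOn
      (hclose l hlK m hmK e₀ le_rfl (hN l hlN m hmN)).1
  · obtain ⟨N', hN'⟩ := hu (min ε e₀) (lt_min hε he₀)
    refine ⟨max K N', fun n hn => ?_⟩
    rw [dist_comm]
    exact (hclose _ (le_max_left _ _) n ((le_max_left _ _).trans hn) _ (min_le_right _ _)
      (hN' _ (le_max_right _ _) n ((le_max_right _ _).trans hn))).2.trans_le (min_le_left _ _)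

lemma exists_isPiece_of_not_eventuallyAgree (hu : IsDtpCauchy u) {dI ts : ℝ}
    (hd : Tendsto (fun n => (u n).d) atTop (𝓝 dI)) (hts : ts < dI)
    (hnot : ¬ EventuallyAgree u ts) :
    ∃ (γ : ℝ) (i : I) (x : M i) (y : ℕ → M i) (b : ℕ → ℝ), γ < dI ∧
      (∀ᶠ m in atTop, IsPiece (u m) γ (b m) ⟨i, (x, y m)⟩) ∧ EventuallyAgree u γ ∧
      CauchySeq y ∧ Tendsto b atTop (𝓝 dI) := by
  obtain ⟨th, hts, hth⟩ := exists_between hts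
  have he₀ : 0 < (dI - th) / 2 := by linarith
  have hroom := hd.eventually (lt_mem_nhds (show th + (dI - th) / 2 < dI by linarith))
  have hex := fun ε (hε : 0 < ε) => eventually_exists_isPiece hu hd hth (by linarith) hnot hε
  obtain ⟨γ, i, x, y, b, hP⟩ := exists_common_isPiece hu he₀ hroom
    ((hex 1 one_pos).mono fun m ⟨γ, A, v, hγ, hA, _, hP⟩ => ⟨γ, A, v, ⟨by linarith, hA⟩, hP⟩)
  obtain ⟨hagree, hy⟩ := eventuallyAgree_and_cauchySeq hu he₀ hroom hP
  have hγ : γ < dI := by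
    obtain ⟨m, hm⟩ := hP.exists
    linarith [hm.1.1]
  refine ⟨γ, i, x, y, b, hγ, hP.mono fun _ h => h.2, hagree, hy,
    Metric.tendsto_nhds.2 fun ε hε => ?_⟩
  -- the ends `b m` are those of the type-1 pieces, which are `ε`-close to the ends `d(u m)`
  filter_upwards [hex (ε / 2) (half_pos hε),
    hd.eventually (Metric.ball_mem_nhds _ (half_pos hε)), hP]
    with m ⟨γ', A, v, hγ', hA, hdA, hP'⟩ hdm hPm
  obtain ⟨-, hbA, -⟩ := hPm.2.unique hP' hPm.1 ⟨by linarith, hA⟩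
  have hdm' := abs_lt.1 (Real.dist_eq _ _ ▸ hdm : |(u m).d - dI| < ε / 2)
  rw [Real.dist_eq, abs_lt]
  constructor <;> linarith [hPm.2.le_d]

end NewPiece

end TreeProdFun

open TreeProdFun

/-- the tree product with the metric `D` is complete: every Cauchy
sequence converges. -/
theorem stmt_8 [∀ i, CompleteSpace (M i)] (u : ℕ → TreeProdFun I M)
    (hu : ∀ ε : ℝ, 0 < ε → ∃ N : ℕ, ∀ m ≥ N, ∀ n ≥ N, Dtp (u m) (u n) < ε) :
    ∃ f : TreeProdFun I M,
      Filter.Tendsto (fun n => Dtp (u n) f) Filter.atTop (nhds 0) := by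
  have hu' : IsDtpCauchy u := hu
  obtain ⟨dI, hd⟩ := cauchySeq_tendsto_of_complete hu'.cauchySeq_d
  obtain ⟨F, hF⟩ : ∃ F, IsDtpLimit u F := by
    by_cases hA : ∀ r < dI, EventuallyAgree u r
    · exact exists_isDtpLimit_of_eventuallyAgree hd hA
    · push Not at hA
      obtain ⟨ts, hts, hnot⟩ := hA
      obtain ⟨γ, i, x, y, b, hγ, hpiece, hagree, hy, hb⟩ :=
        exists_isPiece_of_not_eventuallyAgree hu' hd hts hnot
      obtain ⟨z, hz⟩ := cauchySeq_tendsto_of_complete hy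
      exact exists_isDtpLimit_of_isPiece hd hγ hpiece hagree hz hb
  exact ⟨F, hF.tendsto hu'⟩
end
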